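/- arXiv:1907.07230 — 9 statements merged into one kernel-verified Lean document; each statement's English description precedes it below -/
import Mathlib

section
/- If a coverage function f is induced by a weighted universe U and sets A_1,…,A_m ⊆ U, then for every nonempty S ⊆ [m] the W-transform w(S) equals the total weight of the elements in (∩_{i∈S} A_i) \ (∪_{j∉S} A_j), and in particular w(S) ≥ 0. -/
open Finset

/-- The W-transform of a set function `f : 2^[m] → ℝ`. -/
def Wcoeff (m : ℕ) (f : Finset (Fin m) → ℝ) (S : Finset (Fin m)) : ℝ :=
  ∑ T ∈ Finset.univ.filter (fun T : Finset (Fin m) => S ∪ T = Finset.univ),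
    (-1 : ℝ) ^ ((S ∩ T).card + 1) * f T

lemma pow_sum_real {α : Type*} [DecidableEq α] (s : Finset α) :
    (∑ R ∈ s.powerset, (-1 : ℝ) ^ R.card) = if s = ∅ then 1 else 0 := by
  have h := Finset.sum_powerset_neg_one_pow_card (x := s)
  calc (∑ R ∈ s.powerset, (-1 : ℝ) ^ R.card)
      = ((∑ R ∈ s.powerset, (-1 : ℤ) ^ R.card : ℤ) : ℝ) := by push_cast; rfl
    _ = _ := by rw [h]; split_ifs <;> simp

lemma pow_sum_real' {α : Type*} [DecidableEq α] (s : Finset α) :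
    (∑ R ∈ s.powerset, (-1 : ℝ) ^ (R.card + 1)) = if s = ∅ then -1 else 0 := by
  have : ∑ R ∈ s.powerset, (-1 : ℝ) ^ (R.card + 1)
      = -∑ R ∈ s.powerset, (-1 : ℝ) ^ R.card := by
    rw [← Finset.sum_neg_distrib]
    exact Finset.sum_congr rfl fun R _ => by ring
  rw [this, pow_sum_real]
  split_ifs <;> norm_num

lemma key {m : ℕ} (S : Finset (Fin m)) (hS : S.Nonempty) (c : Fin m → Prop)
    [DecidablePred c] :
    ∑ R ∈ S.powerset, (-1 : ℝ) ^ (R.card + 1) *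
        (if (∃ j, j ∉ S ∧ c j) ∨ (∃ i ∈ R, c i) then 1 else 0)
      = if (∀ i ∈ S, c i) ∧ (∀ j ∉ S, ¬ c j) then 1 else 0 := by
  have hSne := Finset.nonempty_iff_ne_empty.mp hS
  by_cases hout : ∃ j, j ∉ S ∧ c j
  · have heq : ∀ R ∈ S.powerset, (-1 : ℝ) ^ (R.card + 1) *
        (if (∃ j, j ∉ S ∧ c j) ∨ (∃ i ∈ R, c i) then 1 else 0)
        = (-1 : ℝ) ^ (R.card + 1) := fun R _ => by rw [if_pos (Or.inl hout), mul_one]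
    rw [Finset.sum_congr rfl heq, pow_sum_real', if_neg hSne]
    obtain ⟨j, hj, hcj⟩ := hout
    rw [if_neg]
    rintro ⟨-, h2⟩; exact h2 j hj hcj
  · push_neg at hout
    have hsimp : ∀ R ∈ S.powerset, (-1 : ℝ) ^ (R.card + 1) *
        (if (∃ j, j ∉ S ∧ c j) ∨ (∃ i ∈ R, c i) then 1 else 0)
        = (-1 : ℝ) ^ (R.card + 1)
          - (if ∃ i ∈ R, c i then 0 else (-1 : ℝ) ^ (R.card + 1)) := by
      intro R _
      by_cases h : ∃ i ∈ R, c i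
      · rw [if_pos (Or.inr h), if_pos h, mul_one, sub_zero]
      · rw [if_neg (by rintro (⟨j, hj, hc⟩ | hex); exacts [hout j hj hc, h hex]),
          if_neg h, mul_zero, sub_self]
    rw [Finset.sum_congr rfl hsimp, Finset.sum_sub_distrib, pow_sum_real', if_neg hSne,
      zero_sub]
    set D := S.filter (fun i => ¬ c i) with hD
    have hfil : (S.powerset.filter (fun R => ¬ ∃ i ∈ R, c i)) = D.powerset := by
      ext R
      simp only [Finset.mem_filter, Finset.mem_powerset, hD, not_exists, not_and]
      constructor
      · rintro ⟨hRS, h⟩ i hiR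
        exact Finset.mem_filter.mpr ⟨hRS hiR, fun hc => h i hiR hc⟩
      · intro h
        refine ⟨fun i hi => (Finset.mem_filter.mp (h hi)).1,
          fun i hi hc => (Finset.mem_filter.mp (h hi)).2 hc⟩
    have h2 : ∑ R ∈ S.powerset, (if ∃ i ∈ R, c i then 0 else (-1 : ℝ) ^ (R.card + 1))
        = ∑ R ∈ D.powerset, (-1 : ℝ) ^ (R.card + 1) := by
      rw [Finset.sum_ite, Finset.sum_const_zero, zero_add, hfil]
    rw [h2, pow_sum_real']
    have hDE : D = ∅ ↔ ∀ i ∈ S, c i := by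
      simp [hD, Finset.filter_eq_empty_iff]
    by_cases h : ∀ i ∈ S, c i
    · rw [if_pos (hDE.mpr h), if_pos ⟨h, fun j hj => hout j hj⟩]; norm_num
    · rw [if_neg (fun he => h (hDE.mp he)), if_neg (fun hc => h hc.1), neg_zero]

/-- If a coverage function `f` is induced by a weighted universe `U` and sets
`A_1, …, A_m ⊆ U`, then for every nonempty `S` the W-transform `w(S)` equals the total
weight of `(∩_{i∈S} A_i) \ (∪_{j∉S} A_j)`; in particular `w(S) ≥ 0`. -/
theorem stmt_1 (m : ℕ) (U : Type) [Fintype U] [DecidableEq U]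
    (wt : U → ℝ) (hwt : ∀ u, 0 ≤ wt u) (A : Fin m → Finset U)
    (f : Finset (Fin m) → ℝ)
    (hf : ∀ T : Finset (Fin m), f T = ∑ u ∈ T.biUnion A, wt u) :
    ∀ S : Finset (Fin m), S.Nonempty →
      (Wcoeff m f S =
        ∑ u ∈ Finset.univ.filter
            (fun u : U => (∀ i ∈ S, u ∈ A i) ∧ ∀ j ∉ S, u ∉ A j), wt u) ∧
      0 ≤ Wcoeff m f S := by
  intro S hS
  have main : Wcoeff m f S =
      ∑ u ∈ Finset.univ.filter
          (fun u : U => (∀ i ∈ S, u ∈ A i) ∧ ∀ j ∉ S, u ∉ A j), wt u := by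
    unfold Wcoeff
    have hbij : ∑ T ∈ Finset.univ.filter (fun T : Finset (Fin m) => S ∪ T = Finset.univ),
        (-1 : ℝ) ^ ((S ∩ T).card + 1) * f T
        = ∑ R ∈ S.powerset, (-1 : ℝ) ^ (R.card + 1) * f (Sᶜ ∪ R) := by
      refine (Finset.sum_nbij' (fun R => Sᶜ ∪ R) (fun T => S ∩ T) ?_ ?_ ?_ ?_ ?_).symm
      · intro R _
        simp only [Finset.mem_filter, Finset.mem_univ, true_and]
        rw [← Finset.union_assoc, Finset.union_compl]
        simp
      · intro T _
        exact Finset.mem_powerset.mpr Finset.inter_subset_left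
      · intro R hR
        rw [Finset.mem_powerset] at hR
        show S ∩ (Sᶜ ∪ R) = R
        rw [Finset.inter_union_distrib_left, Finset.inter_compl, Finset.empty_union,
          Finset.inter_eq_right.mpr hR]
      · intro T hT
        simp only [Finset.mem_filter, Finset.mem_univ, true_and] at hT
        show Sᶜ ∪ S ∩ T = T
        ext x
        have hx : x ∈ S ∪ T := hT ▸ Finset.mem_univ x
        rw [Finset.mem_union] at hx
        simp only [Finset.mem_union, Finset.mem_compl, Finset.mem_inter]
        tauto
      · intro R hR
        rw [Finset.mem_powerset] at hR
        have hr : S ∩ (Sᶜ ∪ R) = R := by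
          rw [Finset.inter_union_distrib_left, Finset.inter_compl, Finset.empty_union,
            Finset.inter_eq_right.mpr hR]
        simp only [hr]
    rw [hbij]
    have hfT : ∀ R : Finset (Fin m), f (Sᶜ ∪ R)
        = ∑ u ∈ Finset.univ, (if u ∈ (Sᶜ ∪ R).biUnion A then wt u else 0) := by
      intro R
      rw [hf, Finset.sum_ite_mem, Finset.univ_inter]
    have step : ∑ R ∈ S.powerset, (-1 : ℝ) ^ (R.card + 1) * f (Sᶜ ∪ R)
        = ∑ u ∈ Finset.univ, ∑ R ∈ S.powerset,
            (-1 : ℝ) ^ (R.card + 1) * (if u ∈ (Sᶜ ∪ R).biUnion A then wt u else 0) := by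
      rw [Finset.sum_comm]
      exact Finset.sum_congr rfl fun R _ => by rw [hfT, Finset.mul_sum]
    rw [step]
    have inner : ∀ u : U, ∑ R ∈ S.powerset,
        (-1 : ℝ) ^ (R.card + 1) * (if u ∈ (Sᶜ ∪ R).biUnion A then wt u else 0)
        = (if (∀ i ∈ S, u ∈ A i) ∧ (∀ j ∉ S, u ∉ A j) then 1 else 0) * wt u := by
      intro u
      rw [← key S hS (fun j => u ∈ A j), Finset.sum_mul]
      refine Finset.sum_congr rfl fun R _ => ?_
      have hiff : (u ∈ (Sᶜ ∪ R).biUnion A) ↔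
          ((∃ j, j ∉ S ∧ u ∈ A j) ∨ (∃ i ∈ R, u ∈ A i)) := by
        simp only [Finset.mem_biUnion, Finset.mem_union, Finset.mem_compl]
        constructor
        · rintro ⟨j, hj | hj, hu⟩
          exacts [Or.inl ⟨j, hj, hu⟩, Or.inr ⟨j, hj, hu⟩]
        · rintro (⟨j, hj, hu⟩ | ⟨j, hj, hu⟩)
          exacts [⟨j, Or.inl hj, hu⟩, ⟨j, Or.inr hj, hu⟩]
      rw [if_congr hiff rfl rfl]
      split_ifs <;> ring
    rw [Finset.sum_congr rfl fun u _ => inner u]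
    have hfin : ∀ u : U, (if (∀ i ∈ S, u ∈ A i) ∧ (∀ j ∉ S, u ∉ A j) then (1:ℝ) else 0) * wt u
        = if (∀ i ∈ S, u ∈ A i) ∧ (∀ j ∉ S, u ∉ A j) then wt u else 0 := by
      intro u; split_ifs <;> ring
    rw [Finset.sum_congr rfl fun u _ => hfin u, Finset.sum_filter]
  exact ⟨main, main ▸ Finset.sum_nonneg fun u _ => hwt u⟩
end

section
/- If a partial function H = {(T_1,f_1),…,(T_n,f_n)} (with T_i ⊆ [m], f_i ≥ 0) is extendible to a coverage function, then it is extendible to a coverage function whose support (the set of nonempty S with w(S) > 0) has size at most n. -/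
open Finset

/-- `f` is a coverage function. -/
def IsCoverage (m : ℕ) (f : Finset (Fin m) → ℝ) : Prop :=
  ∃ (k : ℕ) (wt : Fin k → ℝ) (A : Fin m → Finset (Fin k)),
    (∀ u, 0 ≤ wt u) ∧ ∀ T : Finset (Fin m), f T = ∑ u ∈ T.biUnion A, wt u


lemma cone_carath {n : ℕ} {ι : Type*} [Fintype ι] [DecidableEq ι]
    (v : ι → Fin n → ℝ) (b : Fin n → ℝ) :
    ∀ (w : ι → ℝ), (∀ S, 0 ≤ w S) → ∑ S, w S • v S = b →
    ∃ w' : ι → ℝ, (∀ S, 0 ≤ w' S) ∧ (∑ S, w' S • v S = b) ∧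
      (univ.filter (fun S => w' S ≠ 0)).card ≤ n := by
  classical
  suffices h : ∀ k (w : ι → ℝ), (univ.filter (fun S => w S ≠ 0)).card = k →
      (∀ S, 0 ≤ w S) → ∑ S, w S • v S = b →
      ∃ w' : ι → ℝ, (∀ S, 0 ≤ w' S) ∧ (∑ S, w' S • v S = b) ∧
        (univ.filter (fun S => w' S ≠ 0)).card ≤ n by
    exact fun w hw hs => h _ w rfl hw hs
  intro k
  induction k using Nat.strong_induction_on with
  | _ k ih =>
    intro w hk hw hsum
    by_cases hkn : k ≤ n
    · exact ⟨w, hw, hsum, hk ▸ hkn⟩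
    push_neg at hkn
    set s := univ.filter (fun S => w S ≠ 0) with hs
    have hdep : ¬ LinearIndependent ℝ (fun S : ↥s => v S) := by
      intro hind
      have h1 := hind.fintype_card_le_finrank
      rw [Module.finrank_fin_fun] at h1
      have hcs : Fintype.card ↥s = k := by rw [Fintype.card_coe, ← hk, hs]
      omega
    have hmain : ∃ c : ι → ℝ, (∀ S, c S ≠ 0 → S ∈ s) ∧ (∑ S, c S • v S = 0) ∧
        ∃ S, 0 < c S := by
      obtain ⟨g, hg0, i₀, hgi₀⟩ := Fintype.not_linearIndependent_iff.mp hdep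
      set c : ι → ℝ := fun S => if h : S ∈ s then g ⟨S, h⟩ else 0 with hc
      have hcsupp : ∀ S, c S ≠ 0 → S ∈ s := by
        intro S h
        by_contra hS
        exact h (by simp [hc, hS])
      have hcsum : ∑ S, c S • v S = 0 := by
        rw [← Finset.sum_subset (Finset.subset_univ s)
          (by intro x _ hx; rw [show c x = 0 from by simp [hc, hx]]; simp)]
        rw [← Finset.sum_coe_sort s (fun S => c S • v S)]
        rw [← hg0]
        exact Finset.sum_congr rfl (fun i _ => by simp [hc, i.2])
      by_cases hpos : ∃ i : ↥s, 0 < g i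
      · obtain ⟨i, hi⟩ := hpos
        exact ⟨c, hcsupp, hcsum, ⟨i, by simp [hc, i.2, hi]⟩⟩
      · push_neg at hpos
        refine ⟨-c, ?_, ?_, ?_⟩
        · intro S h
          exact hcsupp S (by simpa using h)
        · simp [hcsum]
        · refine ⟨i₀, ?_⟩
          have : c i₀ = g i₀ := by simp [hc, i₀.2]
          have h2 : g i₀ < 0 := lt_of_le_of_ne (hpos i₀) hgi₀
          simp [this]
          linarith
    obtain ⟨c, hcs, hc0, S₁, hS₁⟩ := hmain
    have hne : (univ.filter (fun S => 0 < c S)).Nonempty := ⟨S₁, by simp [hS₁]⟩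
    obtain ⟨S₀, hS₀mem, hS₀min⟩ := Finset.exists_min_image _ (fun S => w S / c S) hne
    simp only [mem_filter, mem_univ, true_and] at hS₀mem
    set t := w S₀ / c S₀ with ht
    have ht0 : 0 ≤ t := div_nonneg (hw S₀) hS₀mem.le
    set w' : ι → ℝ := fun S => w S - t * c S with hw'def
    have hw'0 : ∀ S, 0 ≤ w' S := by
      intro S
      by_cases hcS : 0 < c S
      · have hmin := hS₀min S (by simp [hcS])
        have h2 : t * c S ≤ w S := (le_div_iff₀ hcS).mp hmin
        simp only [hw'def]
        linarith
      · push_neg at hcS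
        have h2 := mul_nonneg ht0 (neg_nonneg.mpr hcS)
        have h3 := hw S
        simp only [hw'def]
        nlinarith
    have hw'sum : ∑ S, w' S • v S = b := by
      have h0 : ∑ S, (t * c S) • v S = 0 := by
        simp_rw [mul_smul, ← Finset.smul_sum, hc0, smul_zero]
      simp only [hw'def, sub_smul, Finset.sum_sub_distrib, hsum, h0, sub_zero]
    have hS₀c : c S₀ ≠ 0 := ne_of_gt hS₀mem
    have hS₀s : S₀ ∈ s := hcs S₀ hS₀c
    have hsub : univ.filter (fun S => w' S ≠ 0) ⊆ s.erase S₀ := by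
      intro S hS
      simp only [mem_filter, mem_univ, true_and] at hS
      refine Finset.mem_erase.mpr ⟨?_, ?_⟩
      · rintro rfl
        exact hS (by simp [hw'def, ht, div_mul_cancel₀ _ hS₀c])
      · by_contra hSs
        have hwS : w S = 0 := by
          by_contra h
          exact hSs (by simp [hs, h])
        have hcS : c S = 0 := by
          by_contra h
          exact hSs (hcs S h)
        exact hS (by simp [hw'def, hwS, hcS])
    have hlt : (univ.filter (fun S => w' S ≠ 0)).card < k := by
      calc (univ.filter (fun S => w' S ≠ 0)).card ≤ (s.erase S₀).card :=
            Finset.card_le_card hsub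
        _ < s.card := Finset.card_erase_lt_of_mem hS₀s
        _ = k := hk
    exact ih _ hlt w' rfl hw'0 hw'sum


lemma sum_pow_neg_one {α : Type*} [DecidableEq α] (S : Finset α) :
    ∑ U ∈ S.powerset, (-1:ℝ)^U.card = if S = ∅ then 1 else 0 := by
  have h := Finset.sum_powerset_neg_one_pow_card (x := S)
  have h2 : ((∑ U ∈ S.powerset, (-1:ℤ)^U.card : ℤ) : ℝ)
      = ∑ U ∈ S.powerset, (-1:ℝ)^U.card := by push_cast; rfl
  rw [← h2, h]
  split <;> simp

lemma key_sum {m : ℕ} (S S' : Finset (Fin m)) (hS : S.Nonempty) :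
    ∑ T ∈ Finset.univ.filter (fun T : Finset (Fin m) => S ∪ T = Finset.univ),
      (-1 : ℝ) ^ ((S ∩ T).card + 1) * (if (S' ∩ T).Nonempty then (1:ℝ) else 0)
    = if S' = S then 1 else 0 := by
  classical
  have hrest : ∀ T : Finset (Fin m), S ∪ T = Finset.univ → Sᶜ ∪ S ∩ T = T := by
    intro T hT
    have hsc : Sᶜ ⊆ T := by
      intro x hx
      have hx2 := Finset.mem_univ x
      rw [← hT, Finset.mem_union] at hx2
      rcases hx2 with h | h
      · exact absurd h (by simpa using hx)
      · exact h
    rw [Finset.union_inter_distrib_left, Finset.union_comm Sᶜ S, Finset.union_compl,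
      Finset.union_eq_right.mpr hsc, Finset.univ_inter]
  rw [show ∑ T ∈ Finset.univ.filter (fun T : Finset (Fin m) => S ∪ T = Finset.univ),
      (-1 : ℝ) ^ ((S ∩ T).card + 1) * (if (S' ∩ T).Nonempty then (1:ℝ) else 0)
      = ∑ U ∈ S.powerset,
      (-1 : ℝ) ^ (U.card + 1) * (if (S' ∩ (Sᶜ ∪ U)).Nonempty then (1:ℝ) else 0) from ?_]
  · by_cases hsub : S' ⊆ S
    · have hstep : ∀ U ∈ S.powerset,
          (-1 : ℝ) ^ (U.card + 1) * (if (S' ∩ (Sᶜ ∪ U)).Nonempty then (1:ℝ) else 0)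
          = -((-1:ℝ) ^ U.card) + (if S' ∩ U = ∅ then ((-1:ℝ) ^ U.card) else 0) := by
        intro U _
        have hd : S' ∩ Sᶜ = ∅ := by
          rw [Finset.eq_empty_iff_forall_notMem]
          intro x hx
          rw [Finset.mem_inter, Finset.mem_compl] at hx
          exact hx.2 (hsub hx.1)
        have he : S' ∩ (Sᶜ ∪ U) = S' ∩ U := by
          rw [Finset.inter_union_distrib_left, hd, Finset.empty_union]
        rw [he, pow_succ]
        by_cases h : S' ∩ U = ∅
        · simp [h, Finset.nonempty_iff_ne_empty]
        · simp [h, Finset.nonempty_iff_ne_empty]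
      rw [Finset.sum_congr rfl hstep, Finset.sum_add_distrib, Finset.sum_neg_distrib,
        sum_pow_neg_one, if_neg (Finset.nonempty_iff_ne_empty.mp hS), neg_zero, zero_add]
      rw [← Finset.sum_filter]
      have hfilt : S.powerset.filter (fun U => S' ∩ U = ∅) = (S \ S').powerset := by
        ext U
        simp only [Finset.mem_filter, Finset.mem_powerset, Finset.subset_sdiff,
          ← Finset.disjoint_iff_inter_eq_empty]
        constructor
        · exact fun ⟨h1, h2⟩ => ⟨h1, h2.symm⟩
        · exact fun ⟨h1, h2⟩ => ⟨h1, h2.symm⟩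
      rw [hfilt, sum_pow_neg_one]
      by_cases h : S ⊆ S'
      · rw [if_pos (Finset.sdiff_eq_empty_iff_subset.mpr h),
          if_pos (Finset.Subset.antisymm hsub h)]
      · rw [if_neg (fun he => h (Finset.sdiff_eq_empty_iff_subset.mp he)),
          if_neg (fun he => h (le_of_eq he.symm))]
    · have hne : S' ≠ S := fun h => hsub (h ▸ Finset.Subset.refl S')
      rw [if_neg hne]
      obtain ⟨x, hxS', hxS⟩ := Finset.not_subset.mp hsub
      have hstep : ∀ U ∈ S.powerset,
          (-1 : ℝ) ^ (U.card + 1) * (if (S' ∩ (Sᶜ ∪ U)).Nonempty then (1:ℝ) else 0)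
          = -((-1:ℝ) ^ U.card) := by
        intro U _
        have h1 : (S' ∩ (Sᶜ ∪ U)).Nonempty :=
          ⟨x, Finset.mem_inter.mpr ⟨hxS', Finset.mem_union_left _ (Finset.mem_compl.mpr hxS)⟩⟩
        rw [if_pos h1, pow_succ]
        ring
      rw [Finset.sum_congr rfl hstep, Finset.sum_neg_distrib, sum_pow_neg_one,
        if_neg (Finset.nonempty_iff_ne_empty.mp hS), neg_zero]
  · refine Finset.sum_nbij' (fun T => S ∩ T) (fun U => Sᶜ ∪ U) ?_ ?_ ?_ ?_ ?_
    · intro T _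
      exact Finset.mem_powerset.mpr Finset.inter_subset_left
    · intro U _
      simp only [Finset.mem_filter, Finset.mem_univ, true_and]
      rw [← Finset.union_assoc, Finset.union_compl]
      simp
    · intro T hT
      simp only [Finset.mem_filter, Finset.mem_univ, true_and] at hT
      exact hrest T hT
    · intro U hU
      show S ∩ (Sᶜ ∪ U) = U
      rw [Finset.inter_union_distrib_left, Finset.inter_compl, Finset.empty_union,
        Finset.inter_eq_right.mpr (Finset.mem_powerset.mp hU)]
    · intro T hT
      simp only [Finset.mem_filter, Finset.mem_univ, true_and] at hT
      rw [hrest T hT]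

lemma wcoeff_inv {m : ℕ} (w : Finset (Fin m) → ℝ) (S : Finset (Fin m)) (hS : S.Nonempty) :
    Wcoeff m (fun T => ∑ S' ∈ Finset.univ.filter
      (fun S' : Finset (Fin m) => (S' ∩ T).Nonempty), w S') S = w S := by
  classical
  unfold Wcoeff
  have h1 : ∀ T : Finset (Fin m),
      (∑ S' ∈ Finset.univ.filter (fun S' : Finset (Fin m) => (S' ∩ T).Nonempty), w S')
      = ∑ S' : Finset (Fin m), w S' * (if (S' ∩ T).Nonempty then (1:ℝ) else 0) := by
    intro T
    rw [Finset.sum_filter]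
    exact Finset.sum_congr rfl (fun S' _ => by split <;> simp
      )
  calc ∑ T ∈ Finset.univ.filter (fun T : Finset (Fin m) => S ∪ T = Finset.univ),
        (-1 : ℝ) ^ ((S ∩ T).card + 1) *
          (∑ S' ∈ Finset.univ.filter (fun S' : Finset (Fin m) => (S' ∩ T).Nonempty), w S')
      = ∑ S' : Finset (Fin m), w S' *
          ∑ T ∈ Finset.univ.filter (fun T : Finset (Fin m) => S ∪ T = Finset.univ),
          (-1 : ℝ) ^ ((S ∩ T).card + 1) * (if (S' ∩ T).Nonempty then (1:ℝ) else 0) := by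
        simp_rw [h1, Finset.mul_sum]
        rw [Finset.sum_comm]
        exact Finset.sum_congr rfl (fun S' _ =>
          Finset.sum_congr rfl (fun T _ => by ring))
    _ = ∑ S' : Finset (Fin m), w S' * (if S' = S then 1 else 0) := by
        exact Finset.sum_congr rfl (fun S' _ => by rw [key_sum S S' hS])
    _ = w S := by simp

lemma isCoverage_of {m : ℕ} (w : Finset (Fin m) → ℝ) (hw : ∀ S, 0 ≤ w S) :
    IsCoverage m (fun T => ∑ S ∈ Finset.univ.filter
      (fun S : Finset (Fin m) => (S ∩ T).Nonempty), w S) := by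
  classical
  have hcard : Fintype.card (Finset (Fin m)) = 2 ^ m := by simp
  let e : Finset (Fin m) ≃ Fin (2 ^ m) := Fintype.equivFinOfCardEq hcard
  refine ⟨2 ^ m, fun u => w (e.symm u),
    fun i => Finset.univ.filter (fun u => i ∈ e.symm u), fun u => hw _, ?_⟩
  intro Tt
  have hb : Tt.biUnion (fun i => Finset.univ.filter (fun u => i ∈ e.symm u))
      = Finset.univ.filter (fun u => ((e.symm u) ∩ Tt).Nonempty) := by
    ext u
    simp only [Finset.mem_biUnion, Finset.mem_filter, Finset.mem_univ, true_and]
    constructor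
    · rintro ⟨i, hi, hu⟩
      exact ⟨i, Finset.mem_inter.mpr ⟨hu, hi⟩⟩
    · rintro ⟨i, hi⟩
      rw [Finset.mem_inter] at hi
      exact ⟨i, hi.2, hi.1⟩
  rw [hb]
  refine Finset.sum_nbij' (fun S => e S) (fun u => e.symm u) ?_ ?_ ?_ ?_ ?_
  · intro S hS
    simp only [Finset.mem_filter, Finset.mem_univ, true_and] at *
    simpa using hS
  · intro u hu
    simp only [Finset.mem_filter, Finset.mem_univ, true_and] at *
    exact hu
  · intro S _; simp
  · intro u _; simp
  · intro S _; simp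

/-- If a partial function `{(T_i, f_i)}_{i ∈ [n]}` is extendible to a coverage function,
then it is extendible to a coverage function whose support
(the nonempty sets `S` with `w(S) > 0`) has size at most `n`. -/
theorem stmt_3 (m n : ℕ) (T : Fin n → Finset (Fin m)) (fv : Fin n → ℝ)
    (hfv : ∀ i, 0 ≤ fv i)
    (hext : ∃ f, IsCoverage m f ∧ ∀ i, f (T i) = fv i) :
    ∃ f, IsCoverage m f ∧ (∀ i, f (T i) = fv i) ∧
      (Finset.univ.filter
        (fun S : Finset (Fin m) => S.Nonempty ∧ 0 < Wcoeff m f S)).card ≤ n := by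
  classical
  obtain ⟨f, ⟨k, wt, A, hwt, hf⟩, hfT⟩ := hext
  set v : Finset (Fin m) → Fin n → ℝ :=
    fun S i => if (S ∩ T i).Nonempty then 1 else 0 with hv
  -- generic: dot product with v equals filtered sum
  have hdot : ∀ (w : Finset (Fin m) → ℝ) (i : Fin n),
      (∑ S : Finset (Fin m), w S • v S) i
      = ∑ S ∈ Finset.univ.filter (fun S : Finset (Fin m) => (S ∩ T i).Nonempty), w S := by
    intro w i
    rw [Finset.sum_apply, Finset.sum_filter]
    refine Finset.sum_congr rfl (fun S _ => ?_)
    simp only [Pi.smul_apply, smul_eq_mul, hv]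
    split <;> simp
  -- initial weights
  set g : Fin k → Finset (Fin m) := fun u => Finset.univ.filter (fun j => u ∈ A j) with hg
  set w : Finset (Fin m) → ℝ := fun S => if S = ∅ then 0 else
    ∑ u ∈ Finset.univ.filter (fun u => g u = S), wt u with hwdef
  have hw0 : ∀ S, 0 ≤ w S := by
    intro S
    simp only [hwdef]
    split
    · exact le_refl 0
    · exact Finset.sum_nonneg (fun u _ => hwt u)
  have hwsum : ∑ S, w S • v S = fv := by
    funext i
    rw [hdot w i, ← hfT i, hf (T i)]
    have hstep : ∀ S ∈ Finset.univ.filter (fun S : Finset (Fin m) => (S ∩ T i).Nonempty),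
        w S = ∑ u ∈ Finset.univ.filter (fun u => g u = S), wt u := by
      intro S hS
      simp only [Finset.mem_filter] at hS
      have : S ≠ ∅ := by
        intro h
        rw [h] at hS
        simp at hS
      simp only [hwdef, if_neg this]
    rw [Finset.sum_congr rfl hstep,
      Finset.sum_fiberwise_eq_sum_filter _ _ g wt]
    have hset : Finset.univ.filter (fun u => g u ∈ Finset.univ.filter
        (fun S : Finset (Fin m) => (S ∩ T i).Nonempty))
        = (T i).biUnion A := by
      ext u
      simp only [Finset.mem_filter, Finset.mem_univ, true_and, Finset.mem_biUnion, hg]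
      constructor
      · rintro ⟨x, hx⟩
        rw [Finset.mem_inter, Finset.mem_filter] at hx
        exact ⟨x, hx.2, hx.1.2⟩
      · rintro ⟨j, hj, hu⟩
        exact ⟨j, by rw [Finset.mem_inter, Finset.mem_filter]; exact ⟨⟨Finset.mem_univ j, hu⟩, hj⟩⟩
    rw [hset]
  obtain ⟨w', hw'0, hw'sum, hcard⟩ := cone_carath v fv w hw0 hwsum
  refine ⟨fun Tt => ∑ S ∈ Finset.univ.filter
      (fun S : Finset (Fin m) => (S ∩ Tt).Nonempty), w' S,
    isCoverage_of w' hw'0, ?_, ?_⟩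
  · intro i
    show ∑ S ∈ Finset.univ.filter (fun S : Finset (Fin m) => (S ∩ T i).Nonempty), w' S = fv i
    rw [← hdot w' i, hw'sum]
  · refine le_trans (Finset.card_le_card ?_) hcard
    intro S hS
    simp only [Finset.mem_filter, Finset.mem_univ, true_and] at *
    obtain ⟨hne, hpos⟩ := hS
    rw [wcoeff_inv w' S hne] at hpos
    exact ne_of_gt hpos
end

section
/- Let G = (V,E) be a graph and k a rational with χ*(G) ≤ |V|. Define a partial function on ground set V with value 1 on each singleton {v}, value 2 on each edge {i,j} ∈ E, and value k on the full set V. Then this partial function is extendible to a coverage function if and only if χ*(G) ≤ k. -/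
open Finset

def IsIndep {N : ℕ} (G : SimpleGraph (Fin N)) (I : Finset (Fin N)) : Prop :=
  ∀ i ∈ I, ∀ j ∈ I, ¬ G.Adj i j

noncomputable def fracChrom (N : ℕ) (G : SimpleGraph (Fin N)) : ℝ :=
  sInf { c : ℝ | ∃ x : Finset (Fin N) → ℝ,
    (∀ I, 0 ≤ x I ∧ x I ≤ 1) ∧
    (∀ I, ¬ IsIndep G I → x I = 0) ∧
    (∀ v : Fin N, 1 ≤ ∑ I ∈ Finset.univ.filter (fun I : Finset (Fin N) => v ∈ I), x I) ∧
    c = ∑ I : Finset (Fin N), x I }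

/-!
Through its W-transform a coverage function is `hitWeight w` for some `w ≥ 0`. The values `1` on
singletons and `2` on edges say, by inclusion–exclusion, that `w` lives on independent sets and
covers every vertex exactly once, and then `hitWeight w univ` is the total weight of nonempty sets.
So extendibility asks for an exact fractional colouring of weight `k`. An optimal fractional
colouring exists by compactness; it is made exact without changing its weight by treating one
vertex `a` at a time, scaling down the sets through `a` and passing the removed weight from `I` to
`I \ {a}`. Mixing it with the colouring by singletons (weight `N`) then reaches every
`k ∈ [χ*, N]`.
-/

section HitWeight

variable {α : Type*} [Fintype α] [DecidableEq α]

/-- The coverage function whose W-transform is `w`. -/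
noncomputable def hitWeight (w : Finset α → ℝ) (T : Finset α) : ℝ :=
  ∑ I with (I ∩ T).Nonempty, w I

lemma hitWeight_singleton (w : Finset α → ℝ) (v : α) :
    hitWeight w {v} = ∑ I with v ∈ I, w I := by
  refine sum_congr ?_ fun _ _ => rfl
  ext I
  simp [Finset.Nonempty]

lemma hitWeight_univ (w : Finset α → ℝ) : hitWeight w univ = ∑ I with I.Nonempty, w I := by
  simp only [hitWeight, inter_univ]

lemma hitWeight_pair_add_sum_mem_mem (w : Finset α → ℝ) (i j : α) :
    hitWeight w {i, j} + ∑ I with i ∈ I ∧ j ∈ I, w I =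
      hitWeight w {i} + hitWeight w {j} := by
  have hunion : univ.filter (fun I : Finset α => (I ∩ {i, j}).Nonempty) =
      univ.filter (i ∈ ·) ∪ univ.filter (j ∈ ·) := by
    ext I
    simp only [mem_filter, mem_univ, true_and, mem_union, Finset.Nonempty, mem_inter,
      mem_insert, mem_singleton]
    aesop
  rw [hitWeight, hunion, hitWeight_singleton, hitWeight_singleton, filter_and,
    sum_union_inter]

lemma hitWeight_add (w w' : Finset α → ℝ) (T : Finset α) :
    hitWeight (w + w') T = hitWeight w T + hitWeight w' T :=
  sum_add_distrib

lemma hitWeight_smul (c : ℝ) (w : Finset α → ℝ) (T : Finset α) :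
    hitWeight (c • w) T = c * hitWeight w T :=
  (mul_sum _ _ _).symm

lemma hitWeight_univ_le_sum {w : Finset α → ℝ} (hw : ∀ I, 0 ≤ w I) :
    hitWeight w univ ≤ ∑ I, w I := by
  rw [hitWeight_univ]
  exact sum_le_sum_of_subset_of_nonneg (filter_subset _ _) fun I _ _ => hw I

end HitWeight

lemma isCoverage_hitWeight {m : ℕ} {w : Finset (Fin m) → ℝ} (hw : ∀ I, 0 ≤ w I) :
    IsCoverage m (hitWeight w) := by
  set e := Fintype.equivFin (Finset (Fin m))
  refine ⟨Fintype.card (Finset (Fin m)), fun u => w (e.symm u),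
    fun t => {u | t ∈ e.symm u}, fun u => hw _, fun T => ?_⟩
  have hbiUnion : T.biUnion (fun t => {u | t ∈ e.symm u}) =
      univ.filter (fun u => (e.symm u ∩ T).Nonempty) := by
    ext u
    simp only [mem_biUnion, mem_filter, mem_univ, true_and, Finset.Nonempty, mem_inter]
    tauto
  rw [hbiUnion, hitWeight, sum_filter, sum_filter]
  exact (Fintype.sum_equiv e.symm _ _ fun u => rfl).symm

lemma IsCoverage.exists_eq_hitWeight {m : ℕ} {f : Finset (Fin m) → ℝ} (hf : IsCoverage m f) :
    ∃ w : Finset (Fin m) → ℝ, (∀ I, 0 ≤ w I) ∧ f = hitWeight w := by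
  obtain ⟨k, wt, A, hwt, hfA⟩ := hf
  let fiber : Fin k → Finset (Fin m) := fun u => {t | u ∈ A t}
  refine ⟨fun I => ∑ u with fiber u = I, wt u, fun I => sum_nonneg fun u _ => hwt u,
    funext fun T => ?_⟩
  have hbiUnion : T.biUnion A = univ.filter fun u =>
      fiber u ∈ univ.filter fun I : Finset (Fin m) => (I ∩ T).Nonempty := by
    ext u
    simp only [fiber, mem_biUnion, mem_filter, mem_univ, true_and, Finset.Nonempty, mem_inter]
    tauto
  rw [hfA, hbiUnion, ← sum_fiberwise_eq_sum_filter, hitWeight]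

section Shrink

variable {α : Type*} [DecidableEq α]

/-- Scales the weight covering `a` by `c`, keeping the total weight and the weight covering every
other point (see `sum_filter_shrinkAt`). -/
noncomputable def shrinkAt (a : α) (c : ℝ) (y : Finset α → ℝ) (I : Finset α) : ℝ :=
  if a ∈ I then c * y I else y I + (1 - c) * y (insert a I)

lemma shrinkAt_nonneg {a : α} {c : ℝ} {y : Finset α → ℝ} (hc0 : 0 ≤ c) (hc1 : c ≤ 1)
    (hy : ∀ I, 0 ≤ y I) (I : Finset α) : 0 ≤ shrinkAt a c y I := by
  unfold shrinkAt
  split_ifs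
  · exact mul_nonneg hc0 (hy I)
  · exact add_nonneg (hy I) (mul_nonneg (sub_nonneg.2 hc1) (hy _))

variable [Fintype α]

lemma sum_filter_shrinkAt (a : α) (c : ℝ) (y : Finset α → ℝ) (p : Finset α → Prop)
    [DecidablePred p] (hp : ∀ I, a ∉ I → (p (insert a I) ↔ p I)) :
    ∑ I with p I, shrinkAt a c y I = ∑ I with p I, y I := by
  have hmove : ∑ I ∈ (univ.filter p).filter (a ∉ ·), y (insert a I) =
      ∑ I ∈ (univ.filter p).filter (a ∈ ·), y I := by
    refine sum_nbij' (insert a) (fun J => J.erase a) ?_ ?_ ?_ ?_ fun _ _ => rfl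
    · intro I hI
      simp only [mem_filter, mem_univ, true_and] at hI ⊢
      exact ⟨(hp I hI.2).2 hI.1, mem_insert_self a I⟩
    · intro J hJ
      simp only [mem_filter, mem_univ, true_and] at hJ ⊢
      refine ⟨(hp _ (notMem_erase a J)).1 ?_, notMem_erase a J⟩
      rw [insert_erase hJ.2]
      exact hJ.1
    · intro I hI
      exact erase_insert (mem_filter.1 hI).2
    · intro J hJ
      exact insert_erase (mem_filter.1 hJ).2
  have hin : ∑ I ∈ (univ.filter p).filter (a ∈ ·), shrinkAt a c y I =
      c * ∑ I ∈ (univ.filter p).filter (a ∈ ·), y I := by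
    rw [mul_sum]
    exact sum_congr rfl fun I hI => if_pos (mem_filter.1 hI).2
  have hout : ∑ I ∈ (univ.filter p).filter (a ∉ ·), shrinkAt a c y I =
      ∑ I ∈ (univ.filter p).filter (a ∉ ·), y I +
        (1 - c) * ∑ I ∈ (univ.filter p).filter (a ∉ ·), y (insert a I) := by
    rw [mul_sum, ← sum_add_distrib]
    exact sum_congr rfl fun I hI => if_neg (mem_filter.1 hI).2
  rw [← sum_filter_add_sum_filter_not _ (a ∈ ·),
    ← sum_filter_add_sum_filter_not _ (a ∈ ·) y,
    hin, hout, hmove]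
  ring

lemma sum_shrinkAt (a : α) (c : ℝ) (y : Finset α → ℝ) :
    ∑ I, shrinkAt a c y I = ∑ I, y I := by
  simpa using sum_filter_shrinkAt a c y (fun _ => True) fun _ _ => Iff.rfl

lemma hitWeight_shrinkAt_singleton_self (a : α) (c : ℝ) (y : Finset α → ℝ) :
    hitWeight (shrinkAt a c y) {a} = c * hitWeight y {a} := by
  rw [hitWeight_singleton, hitWeight_singleton, mul_sum]
  exact sum_congr rfl fun I hI => if_pos (mem_filter.1 hI).2

lemma hitWeight_shrinkAt_singleton_of_ne {a v : α} (hva : v ≠ a) (c : ℝ)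
    (y : Finset α → ℝ) :
    hitWeight (shrinkAt a c y) {v} = hitWeight y {v} := by
  rw [hitWeight_singleton, hitWeight_singleton]
  exact sum_filter_shrinkAt a c y (v ∈ ·) fun I _ => by simp [hva]

end Shrink

section SingletonWeight

variable {α : Type*}

noncomputable def singletonWeight (I : Finset α) : ℝ := if I.card = 1 then 1 else 0

lemma singletonWeight_nonneg (I : Finset α) : 0 ≤ singletonWeight I := by
  unfold singletonWeight
  split_ifs <;> norm_num

lemma singletonWeight_le_one (I : Finset α) : singletonWeight I ≤ 1 := by
  unfold singletonWeight
  split_ifs <;> norm_num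

variable [Fintype α] [DecidableEq α]

lemma hitWeight_singletonWeight_singleton (v : α) : hitWeight singletonWeight {v} = 1 := by
  rw [hitWeight_singleton, sum_eq_single_of_mem {v} (by simp)]
  · simp [singletonWeight]
  · intro J hJ hJv
    obtain ⟨u, rfl⟩ | hcard := em (∃ u, J = {u})
    · simp_all
    · simp [singletonWeight, card_eq_one, hcard]

lemma hitWeight_singletonWeight_univ :
    hitWeight (singletonWeight (α := α)) univ = Fintype.card α := by
  have hempty : singletonWeight (∅ : Finset α) = 0 := by simp [singletonWeight]
  rw [hitWeight_univ, sum_filter_of_ne fun I _ hI =>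
    nonempty_iff_ne_empty.2 (by rintro rfl; exact hI hempty)]
  simp [singletonWeight, sum_boole, ← powerset_univ, ← powersetCard_eq_filter]

end SingletonWeight

section IndepWeighting

variable {N : ℕ} {G : SimpleGraph (Fin N)}

lemma IsIndep.mono {I J : Finset (Fin N)} (hIJ : I ⊆ J) (hJ : IsIndep G J) : IsIndep G I :=
  fun i hi j hj => hJ i (hIJ hi) j (hIJ hj)

lemma not_isIndep_iff {I : Finset (Fin N)} :
    ¬ IsIndep G I ↔ ∃ i ∈ I, ∃ j ∈ I, G.Adj i j := by
  simp [IsIndep]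

structure IsIndepWeighting (G : SimpleGraph (Fin N)) (x : Finset (Fin N) → ℝ) : Prop where
  nonneg : ∀ I, 0 ≤ x I
  eq_zero_of_not_isIndep : ∀ I, ¬ IsIndep G I → x I = 0

namespace IsIndepWeighting

variable {x y : Finset (Fin N) → ℝ}

lemma add (hx : IsIndepWeighting G x) (hy : IsIndepWeighting G y) :
    IsIndepWeighting G (x + y) where
  nonneg I := add_nonneg (hx.nonneg I) (hy.nonneg I)
  eq_zero_of_not_isIndep I hI := by
    simp [hx.eq_zero_of_not_isIndep I hI, hy.eq_zero_of_not_isIndep I hI]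

lemma smul (hx : IsIndepWeighting G x) {c : ℝ} (hc : 0 ≤ c) : IsIndepWeighting G (c • x) where
  nonneg I := mul_nonneg hc (hx.nonneg I)
  eq_zero_of_not_isIndep I hI := by simp [hx.eq_zero_of_not_isIndep I hI]

lemma shrinkAt (hy : IsIndepWeighting G y) (a : Fin N) {c : ℝ} (hc0 : 0 ≤ c) (hc1 : c ≤ 1) :
    IsIndepWeighting G (shrinkAt a c y) where
  nonneg := shrinkAt_nonneg hc0 hc1 hy.nonneg
  eq_zero_of_not_isIndep I hI := by
    have hinsert : ¬ IsIndep G (insert a I) := fun h => hI (h.mono (subset_insert a I))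
    simp [_root_.shrinkAt, hy.eq_zero_of_not_isIndep I hI, hy.eq_zero_of_not_isIndep _ hinsert]

lemma hitWeight_pair (hx : IsIndepWeighting G x) {i j : Fin N} (hij : G.Adj i j) :
    hitWeight x {i, j} = hitWeight x {i} + hitWeight x {j} := by
  have hboth : ∑ I with i ∈ I ∧ j ∈ I, x I = 0 :=
    sum_eq_zero fun I hI => hx.eq_zero_of_not_isIndep I <|
      not_isIndep_iff.2 ⟨i, (mem_filter.1 hI).2.1, j, (mem_filter.1 hI).2.2, hij⟩
  rw [← hitWeight_pair_add_sum_mem_mem, hboth, add_zero]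

lemma of_hitWeight_pair (hx : ∀ I, 0 ≤ x I)
    (hpair : ∀ i j, G.Adj i j → hitWeight x {i, j} = hitWeight x {i} + hitWeight x {j}) :
    IsIndepWeighting G x where
  nonneg := hx
  eq_zero_of_not_isIndep I hI := by
    obtain ⟨i, hi, j, hj, hij⟩ := not_isIndep_iff.1 hI
    have hboth : ∑ J with i ∈ J ∧ j ∈ J, x J = 0 := by
      linarith [hitWeight_pair_add_sum_mem_mem x i j, hpair i j hij]
    exact (sum_eq_zero_iff_of_nonneg fun J _ => hx J).1 hboth I (by simp [hi, hj])

end IsIndepWeighting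

lemma isIndepWeighting_singletonWeight (G : SimpleGraph (Fin N)) :
    IsIndepWeighting G singletonWeight where
  nonneg := singletonWeight_nonneg
  eq_zero_of_not_isIndep I hI := by
    obtain ⟨i, hi, j, hj, hij⟩ := not_isIndep_iff.1 hI
    have hcard : I.card ≠ 1 := fun h => hij.ne (card_le_one.1 h.le i hi j hj)
    simp [singletonWeight, hcard]

end IndepWeighting

section FracChrom

variable {N : ℕ}

def fracColorings (G : SimpleGraph (Fin N)) : Set (Finset (Fin N) → ℝ) :=
  {x | (∀ I, 0 ≤ x I ∧ x I ≤ 1) ∧ (∀ I, ¬ IsIndep G I → x I = 0) ∧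
    ∀ v, 1 ≤ ∑ I with v ∈ I, x I}

variable (G : SimpleGraph (Fin N))

lemma fracChrom_eq_sInf_image :
    fracChrom N G = sInf ((fun x => ∑ I, x I) '' fracColorings G) := by
  rw [fracChrom]
  congr 1
  ext c
  constructor
  · rintro ⟨x, hbox, hindep, hcover, rfl⟩
    exact ⟨x, ⟨hbox, hindep, hcover⟩, rfl⟩
  · rintro ⟨x, ⟨hbox, hindep, hcover⟩, rfl⟩
    exact ⟨x, hbox, hindep, hcover, rfl⟩

lemma isCompact_fracColorings : IsCompact (fracColorings G) := by
  refine isCompact_Icc.of_isClosed_subset ?_ fun x hx =>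
    ⟨fun I => (hx.1 I).1, fun I => (hx.1 I).2⟩
  simp only [fracColorings, Set.ofPred_and, Set.ofPred_forall]
  refine .inter ?_ (.inter ?_ ?_) <;> refine isClosed_iInter fun I => ?_
  · exact (isClosed_le continuous_const (by fun_prop)).inter
      (isClosed_le (by fun_prop) continuous_const)
  · exact isClosed_iInter fun _ => isClosed_eq (continuous_apply I) continuous_const
  · exact isClosed_le continuous_const (by fun_prop)

lemma exists_mem_fracColorings_sum_eq_fracChrom :
    ∃ x ∈ fracColorings G, ∑ I, x I = fracChrom N G := by
  have hne : (fracColorings G).Nonempty :=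
    ⟨singletonWeight, fun I => ⟨singletonWeight_nonneg I, singletonWeight_le_one I⟩,
      (isIndepWeighting_singletonWeight G).eq_zero_of_not_isIndep,
      fun v => (hitWeight_singleton _ v ▸ hitWeight_singletonWeight_singleton v).ge⟩
  rw [fracChrom_eq_sInf_image]
  exact ((isCompact_fracColorings G).image (by fun_prop)).sInf_mem (hne.image _)

variable {G}

lemma fracChrom_le_hitWeight_univ {x : Finset (Fin N) → ℝ} (hx : IsIndepWeighting G x)
    (hx1 : ∀ v, hitWeight x {v} = 1) : fracChrom N G ≤ hitWeight x univ := by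
  have hle_one : ∀ I : Finset (Fin N), I.Nonempty → x I ≤ 1 := fun I ⟨v, hv⟩ =>
    hx1 v ▸ hitWeight_singleton x v ▸
      single_le_sum (fun J _ => hx.nonneg J) (mem_filter.2 ⟨mem_univ I, hv⟩)
  -- `x ∅` is unconstrained (it may exceed `1`), and dropping it changes no `hitWeight`.
  let x' : Finset (Fin N) → ℝ := fun I => if I.Nonempty then x I else 0
  have hx'_mem : x' ∈ fracColorings G := by
    refine ⟨fun I => ?_, fun I hI => ?_, fun v => ?_⟩
    · by_cases hI : I.Nonempty <;> simp [x', hI, hx.nonneg, hle_one]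
    · simp [x', hx.eq_zero_of_not_isIndep I hI]
    · rw [← hx1 v, hitWeight_singleton]
      exact (sum_congr rfl fun I hI => if_pos ⟨v, (mem_filter.1 hI).2⟩).ge
  rw [fracChrom_eq_sInf_image, hitWeight_univ, sum_filter]
  refine csInf_le ⟨0, ?_⟩ ⟨x', hx'_mem, rfl⟩
  rintro _ ⟨z, hz, rfl⟩
  exact sum_nonneg fun I _ => (hz.1 I).1

end FracChrom

section Extension

variable {N : ℕ} {G : SimpleGraph (Fin N)}

lemma IsIndepWeighting.exists_hitWeight_singleton_eq_one {x : Finset (Fin N) → ℝ}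
    (hx : IsIndepWeighting G x) (hx1 : ∀ v, 1 ≤ hitWeight x {v}) :
    ∃ y, IsIndepWeighting G y ∧ (∀ v, hitWeight y {v} = 1) ∧ ∑ I, y I = ∑ I, x I := by
  suffices ∀ F : Finset (Fin N), ∃ y, IsIndepWeighting G y ∧
      (∀ v, 1 ≤ hitWeight y {v}) ∧ (∀ v ∈ F, hitWeight y {v} = 1) ∧
      ∑ I, y I = ∑ I, x I by
    obtain ⟨y, hy, -, hy1, hsum⟩ := this univ
    exact ⟨y, hy, fun v => hy1 v (mem_univ v), hsum⟩
  intro F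
  induction F using Finset.induction_on with
  | empty => exact ⟨x, hx, hx1, by simp, rfl⟩
  | insert a F haF ih =>
    obtain ⟨y, hy, hy1, hyF, hsum⟩ := ih
    have ha : 0 < hitWeight y {a} := one_pos.trans_le (hy1 a)
    have hself : hitWeight (_root_.shrinkAt a (hitWeight y {a})⁻¹ y) {a} = 1 := by
      rw [hitWeight_shrinkAt_singleton_self, inv_mul_cancel₀ ha.ne']
    refine ⟨_root_.shrinkAt a (hitWeight y {a})⁻¹ y,
      hy.shrinkAt a (inv_nonneg.2 ha.le) (inv_le_one_of_one_le₀ (hy1 a)), fun v => ?_,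
      fun v hv => ?_, (sum_shrinkAt _ _ _).trans hsum⟩
    · obtain rfl | hva := eq_or_ne v a
      · exact hself.ge
      · exact (hitWeight_shrinkAt_singleton_of_ne hva _ _).symm ▸ hy1 v
    · obtain rfl | hvF := mem_insert.1 hv
      · exact hself
      · have hva : v ≠ a := fun h => haF (h ▸ hvF)
        exact (hitWeight_shrinkAt_singleton_of_ne hva _ _).trans (hyF v hvF)

lemma IsIndepWeighting.exists_hitWeight_univ_eq {y : Finset (Fin N) → ℝ}
    (hy : IsIndepWeighting G y) (hy1 : ∀ v, hitWeight y {v} = 1) {t : ℝ}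
    (hyt : hitWeight y univ ≤ t) (htN : t ≤ N) :
    ∃ w, IsIndepWeighting G w ∧ (∀ v, hitWeight w {v} = 1) ∧ hitWeight w univ = t := by
  obtain ⟨a, b, ha, hb, hab, hmix⟩ : t ∈ segment ℝ (hitWeight y univ) N := by
    rw [segment_eq_Icc (hyt.trans htN)]
    exact ⟨hyt, htN⟩
  refine ⟨a • y + b • singletonWeight,
    (hy.smul ha).add ((isIndepWeighting_singletonWeight G).smul hb), fun v => ?_, ?_⟩
  · rw [hitWeight_add, hitWeight_smul, hitWeight_smul, hy1,
      hitWeight_singletonWeight_singleton]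
    linarith
  · rw [hitWeight_add, hitWeight_smul, hitWeight_smul, hitWeight_singletonWeight_univ,
      Fintype.card_fin, ← hmix, smul_eq_mul, smul_eq_mul]

lemma exists_hitWeight_univ_eq_of_fracChrom_le {t : ℝ} (hχt : fracChrom N G ≤ t)
    (htN : t ≤ N) :
    ∃ w, IsIndepWeighting G w ∧ (∀ v, hitWeight w {v} = 1) ∧ hitWeight w univ = t := by
  obtain ⟨x, ⟨hbox, hindep, hcover⟩, hχ⟩ := exists_mem_fracColorings_sum_eq_fracChrom G
  have hx : IsIndepWeighting G x := ⟨fun I => (hbox I).1, hindep⟩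
  obtain ⟨y, hy, hy1, hsum⟩ :=
    hx.exists_hitWeight_singleton_eq_one fun v => hitWeight_singleton x v ▸ hcover v
  refine hy.exists_hitWeight_univ_eq hy1 ?_ htN
  calc hitWeight y univ ≤ ∑ I, y I := hitWeight_univ_le_sum hy.nonneg
    _ = fracChrom N G := hsum.trans hχ
    _ ≤ t := hχt

end Extension

theorem stmt_6_general (N : ℕ) (G : SimpleGraph (Fin N)) (k : ℚ)
    (hk2 : (k : ℝ) ≤ N) :
    (∃ f : Finset (Fin N) → ℝ, IsCoverage N f ∧
        (∀ v : Fin N, f {v} = 1) ∧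
        (∀ i j : Fin N, G.Adj i j → f {i, j} = 2) ∧
        f Finset.univ = (k : ℝ)) ↔
      fracChrom N G ≤ (k : ℝ) := by
  constructor
  · rintro ⟨f, hf, hsingle, hedge, huniv⟩
    obtain ⟨x, hx0, rfl⟩ := hf.exists_eq_hitWeight
    have hx : IsIndepWeighting G x := .of_hitWeight_pair hx0 fun i j hij => by
      rw [hedge i j hij, hsingle, hsingle]
      norm_num
    exact huniv ▸ fracChrom_le_hitWeight_univ hx hsingle
  · intro hk
    obtain ⟨w, hw, hw1, hwk⟩ := exists_hitWeight_univ_eq_of_fracChrom_le hk hk2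
    refine ⟨hitWeight w, isCoverage_hitWeight hw.nonneg, hw1, fun i j hij => ?_, hwk⟩
    rw [hw.hitWeight_pair hij, hw1, hw1]
    norm_num

/-- The partial function with value `1` on singletons, `2` on edges, and `k` on the full
vertex set is extendible to a coverage function iff `χ*(G) ≤ k`. -/
theorem stmt_6 (N : ℕ) (G : SimpleGraph (Fin N)) (k : ℚ)
    (hk1 : 1 ≤ k) (hk2 : (k : ℝ) ≤ N) (hχ : fracChrom N G ≤ (N : ℝ)) :
    (∃ f : Finset (Fin N) → ℝ, IsCoverage N f ∧
        (∀ v : Fin N, f {v} = 1) ∧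
        (∀ i j : Fin N, G.Adj i j → f {i, j} = 2) ∧
        f Finset.univ = (k : ℝ)) ↔
      fracChrom N G ≤ (k : ℝ) :=
  stmt_6_general N G k hk2
end

section
/- Given a partial function H and α ≥ 1, there is no coverage function f with f_i ≤ f(T_i) ≤ α f_i for all i ∈ [n] if and only if there exist reals l_1,…,l_n such that Σ_{i : S∩T_i ≠ ∅} l_i ≤ 0 for all S ⊆ [m], and −α Σ_{i : l_i < 0} f_i l_i < Σ_{i : l_i > 0} f_i l_i. -/
open Finset

/-!
By the W-transform, `f` is a coverage function iff `f T = ∑_{S ∩ T ≠ ∅} w S` for some `w ≥ 0`, so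
the question is whether `fv ≤ ∑_S w S • χ_S ≤ α • fv` has a solution `w ≥ 0`, where `χ_S` is the
incidence vector `i ↦ [S ∩ T i ≠ ∅]`. Farkas' lemma for the system
`∑_S w S • (-χ_S, χ_S) ≤ (-fv, α • fv)` produces `p, q ≥ 0` with `χ_S ⬝ (p - q) ≤ 0` for all `S`
and `fv ⬝ p - α • fv ⬝ q > 0`. Since `fv ≤ α • fv`, the left side of the latter is at most the
minimum of `x ↦ l ⬝ x` over the box `[fv, α • fv]` for `l = p - q`, and that minimum is
`∑_{l > 0} fv l + α ∑_{l < 0} fv l`. Conversely, for a feasible `w` the value `l ⬝ ∑_S w S • χ_S`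
is both `≤ 0` and at least that minimum.

Farkas' lemma itself is proved by induction on the generators: if the last generator is not
separated by `y`, project everything onto `y⊥` along it and recurse.
-/

open Matrix

theorem sum_insert_update_smul {R M ι : Type*} [Semiring R] [AddCommMonoid M] [Module R M]
    [DecidableEq ι] {s : Finset ι} {a : ι} (ha : a ∉ s) (c : ι → R) (t : R) (v : ι → M) :
    ∑ i ∈ insert a s, Function.update c a t i • v i = t • v a + ∑ i ∈ s, c i • v i := by
  rw [Finset.sum_insert ha, Function.update_self]
  congr 1
  exact Finset.sum_congr rfl fun i hi => by
    rw [Function.update_of_ne (ne_of_mem_of_not_mem hi ha)]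

section Farkas

variable {𝕜 ι κ : Type*} [Field 𝕜] [Fintype κ]

/-- Projection onto `y⊥` along `p`; meaningful only when `p ⬝ᵥ y ≠ 0`. -/
def projAlong (p y : κ → 𝕜) : (κ → 𝕜) →ₗ[𝕜] κ → 𝕜 where
  toFun u := u - (u ⬝ᵥ y / p ⬝ᵥ y) • p
  map_add' u u' := by simp only [add_dotProduct, add_div, add_smul]; abel
  map_smul' c u := by
    simp only [smul_dotProduct, smul_eq_mul, mul_div_assoc, smul_sub, smul_smul,
      RingHom.id_apply]

theorem projAlong_apply (p y u : κ → 𝕜) :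
    projAlong p y u = u - (u ⬝ᵥ y / p ⬝ᵥ y) • p := rfl

theorem projAlong_self {p y : κ → 𝕜} (h : p ⬝ᵥ y ≠ 0) : projAlong p y p = 0 := by
  rw [projAlong_apply, div_self h, one_smul, sub_self]

theorem eq_smul_of_projAlong_eq_zero {p y u : κ → 𝕜} (h : projAlong p y u = 0) :
    u = (u ⬝ᵥ y / p ⬝ᵥ y) • p :=
  sub_eq_zero.mp h

theorem projAlong_dotProduct (p y u z : κ → 𝕜) :
    projAlong p y u ⬝ᵥ z = u ⬝ᵥ (z - (p ⬝ᵥ z / p ⬝ᵥ y) • y) := by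
  simp only [projAlong_apply, sub_dotProduct, dotProduct_sub, smul_dotProduct,
    dotProduct_smul, smul_eq_mul]
  ring

variable [LinearOrder 𝕜]

/-- `∑ₖ min_{a k ≤ x ≤ b k} l k * x`, the minimum of `x ↦ l ⬝ᵥ x` over the box `[a, b]`
when `a ≤ b`. -/
def minOnBox (l a b : κ → 𝕜) : 𝕜 :=
  ∑ k with 0 < l k, l k * a k + ∑ k with l k < 0, l k * b k

theorem minOnBox_eq_sum (l a b : κ → 𝕜) :
    minOnBox l a b =
      ∑ k, ((if 0 < l k then l k * a k else 0) + if l k < 0 then l k * b k else 0) := by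
  rw [minOnBox, Finset.sum_filter, Finset.sum_filter, Finset.sum_add_distrib]

variable [IsStrictOrderedRing 𝕜]

theorem dotProduct_self_pos {b : κ → 𝕜} (hb : b ≠ 0) : 0 < b ⬝ᵥ b :=
  (Finset.sum_nonneg fun i _ => mul_self_nonneg (b i)).lt_of_ne
    (Ne.symm (dotProduct_self_eq_zero.not.mpr hb))

theorem farkas_finset (s : Finset ι) (v : ι → κ → 𝕜) (b : κ → 𝕜) :
    (∃ c : ι → 𝕜, 0 ≤ c ∧ ∑ i ∈ s, c i • v i = b) ∨
      ∃ y : κ → 𝕜, (∀ i ∈ s, v i ⬝ᵥ y ≤ 0) ∧ 0 < b ⬝ᵥ y := by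
  classical
  induction s using Finset.induction_on generalizing v b with
  | empty =>
    by_cases hb : b = 0
    · exact Or.inl ⟨0, le_rfl, by simp [hb]⟩
    · exact Or.inr ⟨b, by simp, dotProduct_self_pos hb⟩
  | insert a s ha ih =>
    obtain ⟨c, hc, hcb⟩ | ⟨y, hy, hby⟩ := ih v b
    · refine Or.inl ⟨Function.update c a 0, le_update_iff.2 ⟨le_rfl, fun j _ => hc j⟩, ?_⟩
      rw [sum_insert_update_smul ha, zero_smul, zero_add, hcb]
    rcases le_or_gt (v a ⬝ᵥ y) 0 with hay | hay
    · exact Or.inr ⟨y, Finset.forall_mem_insert _ _ _ |>.mpr ⟨hay, hy⟩, hby⟩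
    set F := projAlong (v a) y
    obtain ⟨c, hc, hcb⟩ | ⟨z, hz, hbz⟩ := ih (fun i => F (v i)) (F b)
    · set x := b - ∑ i ∈ s, c i • v i
      have hFx : F x = 0 := by simp [x, map_sum, hcb]
      have hxy : 0 < x ⬝ᵥ y := by
        have : ∑ i ∈ s, c i * (v i ⬝ᵥ y) ≤ 0 :=
          Finset.sum_nonpos fun i hi => mul_nonpos_of_nonneg_of_nonpos (hc i) (hy i hi)
        simp only [x, sub_dotProduct, sum_dotProduct, smul_dotProduct, smul_eq_mul]
        linarith
      refine Or.inl ⟨Function.update c a (x ⬝ᵥ y / v a ⬝ᵥ y),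
        le_update_iff.2 ⟨(div_pos hxy hay).le, fun j _ => hc j⟩, ?_⟩
      rw [sum_insert_update_smul ha, ← eq_smul_of_projAlong_eq_zero hFx, sub_add_cancel]
    · refine Or.inr ⟨z - (v a ⬝ᵥ z / v a ⬝ᵥ y) • y, ?_, ?_⟩
      · refine Finset.forall_mem_insert _ _ _ |>.mpr ⟨?_, fun i hi => ?_⟩
        · rw [← projAlong_dotProduct, projAlong_self hay.ne', zero_dotProduct]
        · rw [← projAlong_dotProduct]; exact hz i hi
      · rwa [← projAlong_dotProduct]

theorem farkas [Fintype ι] (v : ι → κ → 𝕜) (b : κ → 𝕜) :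
    (∃ c : ι → 𝕜, 0 ≤ c ∧ ∑ i, c i • v i = b) ∨
      ∃ y : κ → 𝕜, (∀ i, v i ⬝ᵥ y ≤ 0) ∧ 0 < b ⬝ᵥ y := by
  simpa using farkas_finset univ v b

theorem farkas_le [Fintype ι] (v : ι → κ → 𝕜) (b : κ → 𝕜) :
    (∃ c : ι → 𝕜, 0 ≤ c ∧ ∑ i, c i • v i ≤ b) ∨
      ∃ y : κ → 𝕜, 0 ≤ y ∧ (∀ i, 0 ≤ v i ⬝ᵥ y) ∧ b ⬝ᵥ y < 0 := by
  classical
  -- Slack variables: the unit vectors join the generators.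
  obtain ⟨c, hc, hcb⟩ | ⟨y, hy, hby⟩ := farkas (Sum.elim v fun k => Pi.single k (1 : 𝕜)) b
  · refine Or.inl ⟨c ∘ Sum.inl, fun i => hc _, ?_⟩
    rw [← hcb, Fintype.sum_sum_type]
    exact le_add_of_nonneg_right <| Finset.sum_nonneg fun k _ =>
      smul_nonneg (hc _) (Pi.single_nonneg.2 zero_le_one)
  · refine Or.inr ⟨-y, fun k => ?_, fun i => ?_, ?_⟩
    · simpa using hy (Sum.inr k)
    · simpa using hy (Sum.inl i)
    · simpa using hby

theorem minOnBox_le_dotProduct {l a b x : κ → 𝕜} (hax : a ≤ x) (hxb : x ≤ b) :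
    minOnBox l a b ≤ x ⬝ᵥ l := by
  rw [minOnBox_eq_sum]
  refine Finset.sum_le_sum fun k _ => ?_
  have := hax k; have := hxb k
  rcases lt_trichotomy (l k) 0 with h | h | h
  · simp only [h, h.not_gt, if_true, if_false, zero_add]; nlinarith
  · simp [h]
  · simp only [h, h.not_gt, if_true, if_false, add_zero]; nlinarith

theorem sub_dotProduct_le_minOnBox {p q a b : κ → 𝕜} (hp : 0 ≤ p) (hq : 0 ≤ q) (hab : a ≤ b) :
    a ⬝ᵥ p - b ⬝ᵥ q ≤ minOnBox (p - q) a b := by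
  rw [minOnBox_eq_sum, dotProduct, dotProduct, ← Finset.sum_sub_distrib]
  refine Finset.sum_le_sum fun k _ => ?_
  have hpk : 0 ≤ p k := hp k
  have hqk : 0 ≤ q k := hq k
  have := mul_le_mul_of_nonneg_left (hab k) hpk
  have := mul_le_mul_of_nonneg_left (hab k) hqk
  simp only [Pi.sub_apply]
  rcases lt_trichotomy (p k - q k) 0 with h | h | h
  · simp only [h, h.not_gt, if_true, if_false, zero_add]; nlinarith
  · simp only [h, lt_irrefl, if_false, add_zero]
    rw [show q k = p k by linarith]; linarith
  · simp only [h, h.not_gt, if_true, if_false, add_zero]; nlinarith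

theorem farkas_box [Fintype ι] (v : ι → κ → 𝕜) {a b : κ → 𝕜} (hab : a ≤ b) :
    (¬ ∃ w : ι → 𝕜, 0 ≤ w ∧ a ≤ ∑ i, w i • v i ∧ ∑ i, w i • v i ≤ b) ↔
      ∃ l : κ → 𝕜, (∀ i, v i ⬝ᵥ l ≤ 0) ∧ 0 < minOnBox l a b := by
  constructor
  · intro hno
    have hsum (w : ι → 𝕜) :
        ∑ i, w i • Sum.elim (-v i) (v i) = Sum.elim (-∑ i, w i • v i) (∑ i, w i • v i) := by
      ext (k | k) <;> simp [Finset.sum_apply]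
    obtain ⟨w, hw, hle⟩ | ⟨y, hy, hvy, hby⟩ :=
      farkas_le (fun i => Sum.elim (-v i) (v i)) (Sum.elim (-a) b)
    · rw [hsum, Sum.elim_le_elim_iff, neg_le_neg_iff] at hle
      exact (hno ⟨w, hw, hle⟩).elim
    rw [← Sum.elim_comp_inl_inr y] at hy hvy hby
    set p := y ∘ Sum.inl
    set q := y ∘ Sum.inr
    rw [← Sum.elim_zero_zero, Sum.elim_le_elim_iff] at hy
    simp only [sumElim_dotProduct_sumElim, neg_dotProduct] at hvy hby
    refine ⟨p - q, fun i => ?_, ?_⟩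
    · rw [dotProduct_sub]; linarith [hvy i]
    · linarith [sub_dotProduct_le_minOnBox hy.1 hy.2 hab]
  · rintro ⟨l, hl, hpos⟩ ⟨w, hw, hax, hxb⟩
    have : (∑ i, w i • v i) ⬝ᵥ l ≤ 0 := by
      simp only [sum_dotProduct, smul_dotProduct, smul_eq_mul]
      exact Finset.sum_nonpos fun i _ => mul_nonpos_of_nonneg_of_nonpos (hw i) (hl i)
    linarith [minOnBox_le_dotProduct (l := l) hax hxb]

end Farkas

theorem isCoverage_iff {m : ℕ} {f : Finset (Fin m) → ℝ} :
    IsCoverage m f ↔ ∃ w : Finset (Fin m) → ℝ, 0 ≤ w ∧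
      ∀ T, f T = ∑ S with (S ∩ T).Nonempty, w S := by
  classical
  constructor
  · rintro ⟨k, wt, A, hwt, hfA⟩
    -- The weight of `S` collects the atoms `u` that lie in exactly the sets `A j`, `j ∈ S`.
    let B (u : Fin k) : Finset (Fin m) := {j | u ∈ A j}
    refine ⟨fun S => ∑ u with B u = S, wt u, fun S => Finset.sum_nonneg fun u _ => hwt u,
      fun T => ?_⟩
    rw [hfA, Finset.sum_fiberwise_eq_sum_filter]
    congr 1
    ext u
    simp [B, Finset.Nonempty, and_comm]
  · rintro ⟨w, hw, hfw⟩
    -- One atom per set `S`, lying in `A j` exactly when `j ∈ S`.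
    let e := Fintype.equivFin (Finset (Fin m))
    refine ⟨_, fun u => w (e.symm u), fun j => {u | j ∈ e.symm u}, fun u => hw _, fun T => ?_⟩
    have hA : T.biUnion (fun j => {u | j ∈ e.symm u}) =
        ({u | (e.symm u ∩ T).Nonempty} : Finset _) := by
      ext u
      simp [Finset.Nonempty, and_comm]
    rw [hfw, hA, Finset.sum_filter, Finset.sum_filter]
    exact (e.symm.sum_comp _).symm

section Incidence

variable {m n : ℕ} (T : Fin n → Finset (Fin m))

def hitVector (S : Finset (Fin m)) : Fin n → ℝ :=
  fun i => if (S ∩ T i).Nonempty then 1 else 0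

theorem sum_smul_hitVector_apply (w : Finset (Fin m) → ℝ) (i : Fin n) :
    (∑ S, w S • hitVector T S) i = ∑ S with (S ∩ T i).Nonempty, w S := by
  simp [hitVector, Finset.sum_apply, Finset.sum_filter]

theorem hitVector_dotProduct (S : Finset (Fin m)) (l : Fin n → ℝ) :
    hitVector T S ⬝ᵥ l = ∑ i with (S ∩ T i).Nonempty, l i := by
  simp [hitVector, dotProduct, Finset.sum_filter]

theorem exists_isCoverage_iff (a b : Fin n → ℝ) :
    (∃ f, IsCoverage m f ∧ ∀ i, a i ≤ f (T i) ∧ f (T i) ≤ b i) ↔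
      ∃ w : Finset (Fin m) → ℝ, 0 ≤ w ∧
        a ≤ ∑ S, w S • hitVector T S ∧ ∑ S, w S • hitVector T S ≤ b := by
  simp only [Pi.le_def, sum_smul_hitVector_apply]
  constructor
  · rintro ⟨f, hf, hab⟩
    obtain ⟨w, hw, hfw⟩ := isCoverage_iff.1 hf
    exact ⟨w, hw, fun i => hfw (T i) ▸ (hab i).1, fun i => hfw (T i) ▸ (hab i).2⟩
  · rintro ⟨w, hw, ha, hb⟩
    exact ⟨_, isCoverage_iff.2 ⟨w, hw, fun _ => rfl⟩, fun i => ⟨ha i, hb i⟩⟩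

end Incidence

/-- Farkas-type alternative: there is no coverage function `f` with
`f_i ≤ f(T_i) ≤ α f_i` for all `i` iff there exist reals `l_1, …, l_n` with
`∑_{i : S ∩ T_i ≠ ∅} l_i ≤ 0` for all `S ⊆ [m]` and
`-α ∑_{i : l_i < 0} f_i l_i < ∑_{i : l_i > 0} f_i l_i`. -/
theorem stmt_8 (m n : ℕ) (T : Fin n → Finset (Fin m)) (fv : Fin n → ℝ)
    (hfv : ∀ i, 0 ≤ fv i) (α : ℝ) (hα : 1 ≤ α) :
    (¬ ∃ f : Finset (Fin m) → ℝ, IsCoverage m f ∧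
        ∀ i, fv i ≤ f (T i) ∧ f (T i) ≤ α * fv i) ↔
      ∃ l : Fin n → ℝ,
        (∀ S : Finset (Fin m),
          ∑ i ∈ Finset.univ.filter (fun i => ((S ∩ T i).Nonempty)), l i ≤ 0) ∧
        (-α * ∑ i ∈ Finset.univ.filter (fun i => l i < 0), fv i * l i <
          ∑ i ∈ Finset.univ.filter (fun i => 0 < l i), fv i * l i) := by
  have hbox : fv ≤ α • fv := fun i => le_mul_of_one_le_left (hfv i) hα
  refine (not_congr (exists_isCoverage_iff T fv (α • fv))).trans
    ((farkas_box _ hbox).trans (exists_congr fun l => and_congr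
      (forall_congr' fun S => by rw [hitVector_dotProduct]) ?_))
  have hneg : ∑ i with l i < 0, l i * (α • fv) i = α * ∑ i with l i < 0, fv i * l i := by
    rw [Finset.mul_sum]
    exact Finset.sum_congr rfl fun i _ => by simp only [Pi.smul_apply, smul_eq_mul]; ring
  have hpos : ∑ i with 0 < l i, l i * fv i = ∑ i with 0 < l i, fv i * l i :=
    Finset.sum_congr rfl fun i _ => mul_comm _ _
  rw [minOnBox, hneg, hpos]
  constructor <;> intro h <;> linarith
end

section
/- For any partial function H, the optimal approximation factor α* for Coverage Approximate Extension satisfies α* ≥ 1/κ, where κ is the replacement ratio of H. -/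
/-!
Coverage functions are monotone and subadditive. So if `f` is a coverage function with
`fv i ≤ f (T i) ≤ α fv i` and `R` replaces `v`, then
`fv v ≤ f (T v) ≤ f (⋃_{w ∈ R} T w) ≤ ∑_{w ∈ R} f (T w) ≤ α ∑_{w ∈ R} fv w`,
i.e. every replacement ratio is at least `1 / α`, whence `α ≥ 1 / κ`.
-/

open Finset Filter

/-- The optimal approximation factor `α*` for Coverage Approximate Extension:
the least `α ≥ 1` such that some coverage function `f` satisfies
`f_i ≤ f(T_i) ≤ α f_i` for all `i`. -/
noncomputable def alphaStar (m n : ℕ) (T : Fin n → Finset (Fin m)) (fv : Fin n → ℝ) : ℝ :=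
  sInf {α : ℝ | 1 ≤ α ∧ ∃ f : Finset (Fin m) → ℝ, IsCoverage m f ∧
    ∀ i, fv i ≤ f (T i) ∧ f (T i) ≤ α * fv i}

/-- The replacement ratio `κ`: the minimum over vertices `v` and replacements
`R ⊆ A \ {v}` with `N(R) ⊇ N(v)` of `(∑_{w ∈ R} f_w) / f_v`. -/
noncomputable def kappa (m n : ℕ) (T : Fin n → Finset (Fin m)) (fv : Fin n → ℝ) : ℝ :=
  sInf {c : ℝ | ∃ (v : Fin n) (R : Finset (Fin n)), v ∉ R ∧ T v ⊆ R.biUnion T ∧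
    c = (∑ w ∈ R, fv w) / fv v}

namespace IsCoverage

variable {m : ℕ} {f : Finset (Fin m) → ℝ}

theorem map_empty (hf : IsCoverage m f) : f ∅ = 0 := by
  obtain ⟨k, wt, A, -, hfA⟩ := hf
  simp [hfA]

theorem mono (hf : IsCoverage m f) {s t : Finset (Fin m)} (hst : s ⊆ t) : f s ≤ f t := by
  obtain ⟨k, wt, A, hwt, hfA⟩ := hf
  rw [hfA, hfA]
  exact sum_le_sum_of_subset_of_nonneg (biUnion_subset_biUnion_of_subset_left A hst)
    fun u _ _ => hwt u

theorem union_le (hf : IsCoverage m f) (s t : Finset (Fin m)) : f (s ∪ t) ≤ f s + f t := by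
  classical
  obtain ⟨k, wt, A, hwt, hfA⟩ := hf
  rw [hfA, hfA, hfA, union_biUnion, ← sum_union_inter]
  exact le_add_of_nonneg_right (sum_nonneg fun u _ => hwt u)

theorem biUnion_le_sum (hf : IsCoverage m f) {ι : Type*} (R : Finset ι)
    (T : ι → Finset (Fin m)) : f (R.biUnion T) ≤ ∑ w ∈ R, f (T w) :=
  sup_eq_biUnion R T ▸ R.apply_sup_le_sum hf.map_empty (hf.union_le _ _)

theorem const_mul_card {c : ℝ} (hc : 0 ≤ c) : IsCoverage m fun s => c * #s :=
  ⟨m, fun _ => c, singleton, fun _ => hc, fun s => by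
    rw [biUnion_singleton_eq_self, sum_const, nsmul_eq_mul, mul_comm]⟩

end IsCoverage

section Extension

variable {m n : ℕ} {T : Fin n → Finset (Fin m)} {fv : Fin n → ℝ}
  {f : Finset (Fin m) → ℝ} {α : ℝ}

theorem le_mul_sum_of_subset_biUnion (hf : IsCoverage m f)
    (hext : ∀ i, fv i ≤ f (T i) ∧ f (T i) ≤ α * fv i) {v : Fin n} {R : Finset (Fin n)}
    (hcov : T v ⊆ R.biUnion T) : fv v ≤ α * ∑ w ∈ R, fv w :=
  calc fv v ≤ f (T v) := (hext v).1
    _ ≤ f (R.biUnion T) := hf.mono hcov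
    _ ≤ ∑ w ∈ R, f (T w) := hf.biUnion_le_sum R T
    _ ≤ α * ∑ w ∈ R, fv w := by
      rw [mul_sum]
      exact sum_le_sum fun w _ => (hext w).2

/-- If no replacement exists, `kappa = sInf ∅ = 0` and `1 / kappa = 0`. -/
theorem one_div_kappa_le (hfv : ∀ i, 0 < fv i) (hα : 0 < α) (hf : IsCoverage m f)
    (hext : ∀ i, fv i ≤ f (T i) ∧ f (T i) ≤ α * fv i) : 1 / kappa m n T fv ≤ α := by
  rcases Set.eq_empty_or_nonempty {c : ℝ | ∃ (v : Fin n) (R : Finset (Fin n)), v ∉ R ∧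
      T v ⊆ R.biUnion T ∧ c = (∑ w ∈ R, fv w) / fv v} with hK | hK
  · rw [kappa, hK, Real.sInf_empty, div_zero]
    exact hα.le
  · have hκ : 1 / α ≤ kappa m n T fv := by
      refine le_csInf hK ?_
      rintro c ⟨v, R, -, hcov, rfl⟩
      rw [div_le_div_iff₀ hα (hfv v), one_mul, mul_comm]
      exact le_mul_sum_of_subset_biUnion hf hext hcov
    exact (one_div_le (one_div_pos.2 hα |>.trans_le hκ) hα).2 hκ

/-- Witness: `f s = (∑ fv) · #s`, which is `≥ fv i` on the nonempty `T i` and at most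
`(∑ fv) · m` everywhere. -/
theorem exists_coverage_extension (hfv : ∀ i, 0 < fv i) (hT : ∀ i, (T i).Nonempty) :
    ∃ α, 1 ≤ α ∧ ∃ f : Finset (Fin m) → ℝ, IsCoverage m f ∧
      ∀ i, fv i ≤ f (T i) ∧ f (T i) ≤ α * fv i := by
  set C := ∑ i, fv i
  have hC0 : 0 ≤ C := sum_nonneg fun i _ => (hfv i).le
  have hC : ∀ i, fv i ≤ C := fun i => single_le_sum (fun j _ => (hfv j).le) (mem_univ i)
  obtain ⟨α, hα1, hαC⟩ : ∃ α, 1 ≤ α ∧ ∀ i, C * m ≤ α * fv i :=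
    ((eventually_ge_atTop 1).and (eventually_all.2 fun i =>
      (tendsto_id.atTop_mul_const (hfv i)).eventually_ge_atTop (C * m))).exists
  refine ⟨α, hα1, _, IsCoverage.const_mul_card hC0, fun i => ⟨?_, ?_⟩⟩
  · exact (hC i).trans (le_mul_of_one_le_right hC0 (by exact_mod_cast (hT i).card_pos))
  · have hcard : (#(T i) : ℝ) ≤ m := by
      exact_mod_cast (T i).card_le_univ.trans_eq (Fintype.card_fin m)
    exact (mul_le_mul_of_nonneg_left hcard hC0).trans (hαC i)

end Extension

/-- For any partial function, `α* ≥ 1/κ`. -/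
theorem stmt_9 (m n : ℕ) (T : Fin n → Finset (Fin m)) (fv : Fin n → ℝ)
    (hfv : ∀ i, 0 < fv i) (hT : ∀ i, (T i).Nonempty) :
    1 / kappa m n T fv ≤ alphaStar m n T fv := by
  obtain ⟨α, hα, f, hf, hext⟩ := exists_coverage_extension hfv hT
  exact le_csInf ⟨α, hα, f, hf, hext⟩ fun α ⟨hα, f, hf, hext⟩ =>
    one_div_kappa_le hfv (zero_lt_one.trans_le hα) hf hext
end

section
/- For the partial function H = {({1}, r), ({2}, r), ({1,2}, 1)} over ground set {1,2} with r ≥ 1, the minimum α ≥ 1 for which some coverage function f satisfies f_i ≤ f(T_i) ≤ α f_i on all three defined sets equals r. -/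
open Finset

lemma mem_stmt14 (r : ℝ) (hr : 1 ≤ r) :
    r ∈ {α : ℝ | 1 ≤ α ∧ ∃ f : Finset (Fin 2) → ℝ, IsCoverage 2 f ∧
      r ≤ f {0} ∧ f {0} ≤ α * r ∧
      r ≤ f {1} ∧ f {1} ≤ α * r ∧
      1 ≤ f Finset.univ ∧ f Finset.univ ≤ α} := by
  refine ⟨hr, fun T => ∑ u ∈ T.biUnion (fun _ => ({0} : Finset (Fin 1))), r,
    ⟨1, fun _ => r, fun _ => {0}, fun _ => le_trans zero_le_one hr, fun T => rfl⟩, ?_⟩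
  have h0 : (({0} : Finset (Fin 2)).biUnion (fun _ => ({0} : Finset (Fin 1)))) = {0} := by
    decide
  have h1 : (({1} : Finset (Fin 2)).biUnion (fun _ => ({0} : Finset (Fin 1)))) = {0} := by
    decide
  have h2 : ((Finset.univ : Finset (Fin 2)).biUnion (fun _ => ({0} : Finset (Fin 1)))) = {0} := by
    decide
  simp only [h0, h1, h2, Finset.sum_singleton]
  refine ⟨le_refl r, le_mul_of_one_le_left (le_trans zero_le_one hr) hr,
    le_refl r, le_mul_of_one_le_left (le_trans zero_le_one hr) hr, hr, le_refl r⟩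

/-- For the partial function `{({1}, r), ({2}, r), ({1,2}, 1)}` over ground set `{1,2}`
with `r ≥ 1`, the least `α ≥ 1` admitting a coverage function `f` with
`f_i ≤ f(T_i) ≤ α f_i` on all three defined sets equals `r`. -/
theorem stmt_14 (r : ℝ) (hr : 1 ≤ r) :
    sInf {α : ℝ | 1 ≤ α ∧ ∃ f : Finset (Fin 2) → ℝ, IsCoverage 2 f ∧
      r ≤ f {0} ∧ f {0} ≤ α * r ∧
      r ≤ f {1} ∧ f {1} ≤ α * r ∧
      1 ≤ f Finset.univ ∧ f Finset.univ ≤ α} = r := by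
  apply le_antisymm
  · apply csInf_le _ (mem_stmt14 r hr)
    refine ⟨r, fun α hα => ?_⟩
    obtain ⟨h1, f, ⟨k, wt, A, hw, hf⟩, hr0, _, _, _, _, hle⟩ := hα
    calc r ≤ f {0} := hr0
      _ ≤ f Finset.univ := by
          rw [hf, hf]
          exact Finset.sum_le_sum_of_subset_of_nonneg
            (Finset.biUnion_subset_biUnion_of_subset_left A (Finset.subset_univ _))
            (fun i _ _ => hw i)
      _ ≤ α := hle
  · apply le_csInf ⟨r, mem_stmt14 r hr⟩
    intro α hα
    obtain ⟨h1, f, ⟨k, wt, A, hw, hf⟩, hr0, _, _, _, _, hle⟩ := hα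
    calc r ≤ f {0} := hr0
      _ ≤ f Finset.univ := by
          rw [hf, hf]
          exact Finset.sum_le_sum_of_subset_of_nonneg
            (Finset.biUnion_subset_biUnion_of_subset_left A (Finset.subset_univ _))
            (fun i _ _ => hw i)
      _ ≤ α := hle
end

section
/- Let y^R ∈ [-1,1]^n satisfy Σ_{i : j ∈ T_i} y^R_i ≤ 0 for every element j ∈ [m], where each T_i ⊆ [m] has |T_i| ≤ d. Define y^A by y^A_i = y^R_i if y^R_i ≤ 0 and y^A_i = y^R_i/d otherwise. Then Σ_{i : S ∩ T_i ≠ ∅} y^A_i ≤ 0 for every S ⊆ [m]. -/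
open Finset

/-- If `y^R ∈ [-1,1]^n` satisfies the singleton constraints
`∑_{i : j ∈ T_i} y^R_i ≤ 0` for every `j ∈ [m]`, where each `T_i` has size at most `d`,
and `y^A_i = y^R_i` when `y^R_i ≤ 0` and `y^A_i = y^R_i / d` otherwise, then
`∑_{i : S ∩ T_i ≠ ∅} y^A_i ≤ 0` for every `S ⊆ [m]`. -/
theorem stmt_15 (m n d : ℕ) (hd : 1 ≤ d) (T : Fin n → Finset (Fin m))
    (hT : ∀ i, (T i).Nonempty ∧ (T i).card ≤ d)
    (yR : Fin n → ℝ) (hyR : ∀ i, -1 ≤ yR i ∧ yR i ≤ 1)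
    (hsing : ∀ j : Fin m, ∑ i ∈ Finset.univ.filter (fun i => j ∈ T i), yR i ≤ 0)
    (yA : Fin n → ℝ)
    (hyA : ∀ i, yA i = if yR i ≤ 0 then yR i else yR i / (d : ℝ)) :
    ∀ S : Finset (Fin m),
      ∑ i ∈ Finset.univ.filter (fun i => (S ∩ T i).Nonempty), yA i ≤ 0 := by
  intro S
  have hdpos : (0 : ℝ) < d := by exact_mod_cast hd
  have step1 : ∑ i ∈ Finset.univ.filter (fun i => (S ∩ T i).Nonempty), yA i ≤
      ∑ i ∈ Finset.univ.filter (fun i => (S ∩ T i).Nonempty),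
        ((S ∩ T i).card : ℝ) * yR i / d := by
    apply Finset.sum_le_sum
    intro i hi
    simp only [Finset.mem_filter] at hi
    have hc1 : 1 ≤ ((S ∩ T i).card : ℝ) := by
      exact_mod_cast Finset.card_pos.mpr hi.2
    have hcd : ((S ∩ T i).card : ℝ) ≤ d := by
      have := Finset.card_le_card (Finset.inter_subset_right (s₁ := S) (s₂ := T i))
      have := le_trans this (hT i).2
      exact_mod_cast this
    rw [hyA i]
    split_ifs with h
    · rw [le_div_iff₀ hdpos]
      nlinarith [mul_nonneg (sub_nonneg.mpr hcd) (neg_nonneg.mpr h)]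
    · push_neg at h
      rw [div_le_div_iff₀ hdpos hdpos]
      nlinarith [mul_nonneg (mul_nonneg (sub_nonneg.mpr hc1) h.le) hdpos.le]
  have step2 : ∑ i ∈ Finset.univ.filter (fun i => (S ∩ T i).Nonempty),
        ((S ∩ T i).card : ℝ) * yR i / d =
      ∑ i : Fin n, ((S ∩ T i).card : ℝ) * yR i / d := by
    apply Finset.sum_subset (Finset.subset_univ _)
    intro i _ hi
    simp only [Finset.mem_filter, Finset.mem_univ, true_and] at hi
    rw [Finset.not_nonempty_iff_eq_empty] at hi
    simp [hi]
  have step3 : ∑ i : Fin n, ((S ∩ T i).card : ℝ) * yR i =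
      ∑ j ∈ S, ∑ i ∈ Finset.univ.filter (fun i => j ∈ T i), yR i := by
    have key : ∀ i, ((S ∩ T i).card : ℝ) * yR i = ∑ j ∈ S, if j ∈ T i then yR i else 0 := by
      intro i
      rw [← Finset.sum_filter, Finset.sum_const, nsmul_eq_mul, Finset.filter_mem_eq_inter]
    simp only [key]
    rw [Finset.sum_comm]
    apply Finset.sum_congr rfl
    intro j _
    rw [Finset.sum_filter]
  have step4 : ∑ j ∈ S, ∑ i ∈ Finset.univ.filter (fun i => j ∈ T i), yR i ≤ 0 :=
    Finset.sum_nonpos fun j _ => hsing j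
  calc ∑ i ∈ Finset.univ.filter (fun i => (S ∩ T i).Nonempty), yA i
      ≤ ∑ i : Fin n, ((S ∩ T i).card : ℝ) * yR i / d := by rw [← step2]; exact step1
    _ = (∑ i : Fin n, ((S ∩ T i).card : ℝ) * yR i) / d := by rw [Finset.sum_div]
    _ ≤ 0 := by
        rw [step3]
        exact div_nonpos_of_nonpos_of_nonneg step4 hdpos.le
end

section
/- With y^R and y^A as above and f_1,…,f_n ≥ 0, Σ_i f_i y^R_i ≤ Σ_i f_i y^A_i + (1 − 1/d)·Σ_i f_i. Consequently, the optimum of the relaxed dual (with only singleton constraints) exceeds the optimum of the full dual Norm-D by at most (1 − 1/d)·F, where F = Σ_i f_i. -/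
open Finset

-- double counting identity
lemma aux_dc {m n : ℕ} (T : Fin n → Finset (Fin m)) (S : Finset (Fin m)) (h : Fin n → ℝ) :
    ∑ j ∈ S, ∑ i ∈ Finset.univ.filter (fun i => j ∈ T i), h i
      = ∑ i, ((S ∩ T i).card : ℝ) * h i := by
  have : ∀ j, ∑ i ∈ Finset.univ.filter (fun i => j ∈ T i), h i
      = ∑ i, if j ∈ T i then h i else 0 := by
    intro j; rw [Finset.sum_filter]
  simp_rw [this]
  rw [Finset.sum_comm]
  congr 1
  ext i
  rw [Finset.sum_ite_mem, Finset.sum_const]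
  simp [mul_comm]

-- key lemma: rounded solution is feasible for the full dual
lemma aux_key {m n d : ℕ} (hd : 1 ≤ d) (T : Fin n → Finset (Fin m))
    (hT : ∀ i, (T i).Nonempty ∧ (T i).card ≤ d)
    (y : Fin n → ℝ)
    (hsing : ∀ j : Fin m, ∑ i ∈ Finset.univ.filter (fun i => j ∈ T i), y i ≤ 0)
    (S : Finset (Fin m)) :
    ∑ i ∈ Finset.univ.filter (fun i => (S ∩ T i).Nonempty),
      (if y i ≤ 0 then y i else y i / (d : ℝ)) ≤ 0 := by
  have hd0 : (0:ℝ) < d := by exact_mod_cast hd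
  set N : Fin n → ℝ := fun i => if y i ≤ 0 then y i else 0 with hN
  set P : Fin n → ℝ := fun i => if y i ≤ 0 then 0 else y i with hP
  have hPnn : ∀ i, 0 ≤ P i := by
    intro i; simp only [hP]; split <;> [rfl; linarith [not_le.mp (by assumption)]]
  have hNnp : ∀ i, N i ≤ 0 := by
    intro i; simp only [hN]; split <;> [assumption; rfl]
  have hsplit : ∀ i, (if y i ≤ 0 then y i else y i / (d : ℝ)) = N i + P i / d := by
    intro i; simp only [hN, hP]; split <;> simp
  simp_rw [hsplit]
  rw [Finset.sum_add_distrib]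
  -- bound the positive part
  have hcard : ∀ i, ((S ∩ T i).card : ℝ) ≤ d := by
    intro i
    exact_mod_cast le_trans (Finset.card_le_card (Finset.inter_subset_right)) (hT i).2
  have h1 : ∑ i ∈ Finset.univ.filter (fun i => (S ∩ T i).Nonempty), P i / (d:ℝ)
      ≤ (1/d) * ∑ i, ((S ∩ T i).card : ℝ) * P i := by
    rw [Finset.mul_sum]
    calc ∑ i ∈ Finset.univ.filter (fun i => (S ∩ T i).Nonempty), P i / (d:ℝ)
        ≤ ∑ i ∈ Finset.univ.filter (fun i => (S ∩ T i).Nonempty),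
            (1/d) * (((S ∩ T i).card : ℝ) * P i) := by
          apply Finset.sum_le_sum
          intro i hi
          simp only [Finset.mem_filter] at hi
          have h1c : (1:ℝ) ≤ (S ∩ T i).card := by
            exact_mod_cast Finset.card_pos.mpr hi.2
          have hdinv : (0:ℝ) ≤ ((d:ℝ))⁻¹ := by positivity
          rw [div_eq_mul_inv, one_div]
          nlinarith [mul_nonneg (mul_nonneg hdinv (hPnn i)) (by linarith : (0:ℝ) ≤ ((S ∩ T i).card : ℝ) - 1)]
      _ ≤ ∑ i, (1/d) * (((S ∩ T i).card : ℝ) * P i) := by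
          apply Finset.sum_le_sum_of_subset_of_nonneg (Finset.filter_subset _ _)
          intro i _ _
          have := hPnn i
          positivity
  have h2 : ∑ i, ((S ∩ T i).card : ℝ) * P i ≤ ∑ i, ((S ∩ T i).card : ℝ) * (-N i) := by
    have := aux_dc T S P
    have h2' := aux_dc T S N
    have hjle : ∀ j ∈ S, ∑ i ∈ Finset.univ.filter (fun i => j ∈ T i), P i
        ≤ ∑ i ∈ Finset.univ.filter (fun i => j ∈ T i), (- N i) := by
      intro j _
      have hs := hsing j
      have : ∀ i, y i = N i + P i := by
        intro i; simp only [hN, hP]; split <;> simp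
      simp_rw [this] at hs
      rw [Finset.sum_add_distrib] at hs
      have : ∑ i ∈ Finset.univ.filter (fun i => j ∈ T i), (-N i)
          = - ∑ i ∈ Finset.univ.filter (fun i => j ∈ T i), N i := by
        rw [Finset.sum_neg_distrib]
      rw [this]; linarith
    calc ∑ i, ((S ∩ T i).card : ℝ) * P i
        = ∑ j ∈ S, ∑ i ∈ Finset.univ.filter (fun i => j ∈ T i), P i := (aux_dc T S P).symm
      _ ≤ ∑ j ∈ S, ∑ i ∈ Finset.univ.filter (fun i => j ∈ T i), (-N i) :=
          Finset.sum_le_sum hjle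
      _ = ∑ i, ((S ∩ T i).card : ℝ) * (-N i) := aux_dc T S (fun i => -N i)
  have h3 : (1/(d:ℝ)) * ∑ i, ((S ∩ T i).card : ℝ) * (-N i)
      ≤ ∑ i ∈ Finset.univ.filter (fun i => (S ∩ T i).Nonempty), (-N i) := by
    rw [Finset.mul_sum]
    have : ∑ i, (1/(d:ℝ)) * (((S ∩ T i).card : ℝ) * (-N i))
        = ∑ i ∈ Finset.univ.filter (fun i => (S ∩ T i).Nonempty),
            (1/(d:ℝ)) * (((S ∩ T i).card : ℝ) * (-N i)) := by
      rw [Finset.sum_filter]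
      apply Finset.sum_congr rfl
      intro i _
      split
      · rfl
      · have : (S ∩ T i) = ∅ := Finset.not_nonempty_iff_eq_empty.mp (by assumption)
        simp [this]
    rw [this]
    apply Finset.sum_le_sum
    intro i _
    have hc := hcard i
    have hn := hNnp i
    have h4 : ((S ∩ T i).card : ℝ) * (-N i) ≤ (d:ℝ) * (-N i) :=
      mul_le_mul_of_nonneg_right hc (by linarith)
    calc (1/(d:ℝ)) * (((S ∩ T i).card : ℝ) * (-N i))
        ≤ (1/(d:ℝ)) * ((d:ℝ) * (-N i)) := mul_le_mul_of_nonneg_left h4 (by positivity)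
      _ = -N i := by field_simp
  have hfinal : ∑ i ∈ Finset.univ.filter (fun i => (S ∩ T i).Nonempty), P i / (d:ℝ)
      ≤ ∑ i ∈ Finset.univ.filter (fun i => (S ∩ T i).Nonempty), (-N i) := by
    calc _ ≤ (1/(d:ℝ)) * ∑ i, ((S ∩ T i).card : ℝ) * P i := h1
      _ ≤ (1/(d:ℝ)) * ∑ i, ((S ∩ T i).card : ℝ) * (-N i) := by
          apply mul_le_mul_of_nonneg_left h2 (by positivity)
      _ ≤ _ := h3
  have : ∑ i ∈ Finset.univ.filter (fun i => (S ∩ T i).Nonempty), (-N i)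
      = - ∑ i ∈ Finset.univ.filter (fun i => (S ∩ T i).Nonempty), N i := by
    rw [Finset.sum_neg_distrib]
  rw [this] at hfinal
  linarith

-- part-1 style inequality, generalized
lemma aux_round {n d : ℕ} (hd : 1 ≤ d) (f : Fin n → ℝ) (hf : ∀ i, 0 ≤ f i)
    (y : Fin n → ℝ) (hy : ∀ i, y i ≤ 1) :
    ∑ i, f i * y i ≤ ∑ i, f i * (if y i ≤ 0 then y i else y i / (d:ℝ))
      + (1 - 1 / (d:ℝ)) * ∑ i, f i := by
  have hd0 : (0:ℝ) < d := by exact_mod_cast hd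
  have h1d : 1/(d:ℝ) ≤ 1 := by
    rw [div_le_one hd0]; exact_mod_cast hd
  rw [Finset.mul_sum, ← Finset.sum_add_distrib]
  apply Finset.sum_le_sum
  intro i _
  by_cases h : y i ≤ 0
  · simp only [h, if_true]
    nlinarith [hf i]
  · simp only [h, if_false]
    push_neg at h
    have h2 : 0 < 1/(d:ℝ) := by positivity
    have : f i * (y i / d) = f i * y i * (1/d) := by ring
    nlinarith [hf i, hy i, mul_nonneg (hf i) (le_of_lt h), mul_le_mul_of_nonneg_left (hy i) (hf i)]

/-- With `y^R` feasible for the relaxed dual (singleton constraints only) and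
`y^A_i = y^R_i` if `y^R_i ≤ 0`, else `y^R_i / d`:
`∑_i f_i y^R_i ≤ ∑_i f_i y^A_i + (1 - 1/d) ∑_i f_i`, and consequently the optimum of the
relaxed dual exceeds the optimum of the full dual Norm-D by at most `(1 - 1/d) F`. -/
theorem stmt_16 (m n d : ℕ) (hd : 1 ≤ d) (T : Fin n → Finset (Fin m))
    (hT : ∀ i, (T i).Nonempty ∧ (T i).card ≤ d)
    (f : Fin n → ℝ) (hf : ∀ i, 0 ≤ f i)
    (yR : Fin n → ℝ) (hyR : ∀ i, -1 ≤ yR i ∧ yR i ≤ 1)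
    (hsing : ∀ j : Fin m, ∑ i ∈ Finset.univ.filter (fun i => j ∈ T i), yR i ≤ 0)
    (yA : Fin n → ℝ)
    (hyA : ∀ i, yA i = if yR i ≤ 0 then yR i else yR i / (d : ℝ)) :
    (∑ i, f i * yR i ≤ ∑ i, f i * yA i + (1 - 1 / (d : ℝ)) * ∑ i, f i) ∧
      sSup {c : ℝ | ∃ y : Fin n → ℝ, (∀ i, -1 ≤ y i ∧ y i ≤ 1) ∧
          (∀ j : Fin m, ∑ i ∈ Finset.univ.filter (fun i => j ∈ T i), y i ≤ 0) ∧
          c = ∑ i, f i * y i} ≤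
        sSup {c : ℝ | ∃ y : Fin n → ℝ, (∀ i, -1 ≤ y i ∧ y i ≤ 1) ∧
          (∀ S : Finset (Fin m),
            ∑ i ∈ Finset.univ.filter (fun i => (S ∩ T i).Nonempty), y i ≤ 0) ∧
          c = ∑ i, f i * y i} + (1 - 1 / (d : ℝ)) * ∑ i, f i := by
  have hd0 : (0:ℝ) < d := by exact_mod_cast hd
  constructor
  · simp_rw [hyA]
    exact aux_round hd f hf yR (fun i => (hyR i).2)
  · set SF := {c : ℝ | ∃ y : Fin n → ℝ, (∀ i, -1 ≤ y i ∧ y i ≤ 1) ∧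
        (∀ S : Finset (Fin m),
          ∑ i ∈ Finset.univ.filter (fun i => (S ∩ T i).Nonempty), y i ≤ 0) ∧
        c = ∑ i, f i * y i} with hSF
    have hSFne : (0:ℝ) ∈ SF := by
      refine ⟨fun _ => 0, fun i => by norm_num, fun S => by simp, by simp⟩
    have hSFbdd : BddAbove SF := by
      refine ⟨∑ i, f i, fun c hc => ?_⟩
      obtain ⟨y, hy, _, rfl⟩ := hc
      calc ∑ i, f i * y i ≤ ∑ i, f i * 1 :=
            Finset.sum_le_sum (fun i _ => mul_le_mul_of_nonneg_left (hy i).2 (hf i))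
        _ = ∑ i, f i := by simp
    have hRne : (0:ℝ) ∈ {c : ℝ | ∃ y : Fin n → ℝ, (∀ i, -1 ≤ y i ∧ y i ≤ 1) ∧
        (∀ j : Fin m, ∑ i ∈ Finset.univ.filter (fun i => j ∈ T i), y i ≤ 0) ∧
        c = ∑ i, f i * y i} := by
      refine ⟨fun _ => 0, fun i => by norm_num, fun j => by simp, by simp⟩
    apply csSup_le ⟨0, hRne⟩
    rintro c ⟨y, hy, hys, rfl⟩
    set y' : Fin n → ℝ := fun i => if y i ≤ 0 then y i else y i / (d:ℝ) with hy'
    have hy'mem : (∑ i, f i * y' i) ∈ SF := by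
      refine ⟨y', fun i => ?_, fun S => ?_, rfl⟩
      · simp only [hy']
        split
        · exact hy i
        · rename_i hpos
          have hpos' : 0 < y i := lt_of_not_ge hpos
          have hdn : 0 ≤ y i / (d:ℝ) := by positivity
          have hds : y i / (d:ℝ) ≤ y i := div_le_self hpos'.le (by exact_mod_cast hd)
          exact ⟨by linarith, le_trans hds (hy i).2⟩
      · exact aux_key hd T hT y hys S
    calc ∑ i, f i * y i ≤ ∑ i, f i * y' i + (1 - 1/(d:ℝ)) * ∑ i, f i :=
          aux_round hd f hf y (fun i => (hy i).2)
      _ ≤ sSup SF + (1 - 1/(d:ℝ)) * ∑ i, f i := by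
          have := le_csSup hSFbdd hy'mem
          linarith
end

section
/- Let G = (V,E) be a graph with edge weights y_e, and G' = (V ∪ {s,t}, E') the graph obtained by adding a vertex s adjacent to all v ∈ V with edge weight y'_{{v,s}} = −(1/2)·w(δ_G(v)), an edge {s,t} of weight −B, and keeping weights y'_e = y_e on E. Then for every S ⊆ V (not containing s or t), the total weight of edges of G' with at least one endpoint in S equals w(δ_G(S))/2. -/
open Finset

/-- Total weight `w(δ(S))` of the cut edges of `S` in a weighted graph given by a
symmetric weight function `y` with zero diagonal (each cut edge counted once). -/
def cutW {V : Type} [Fintype V] [DecidableEq V] (y : V → V → ℝ) (S : Finset V) : ℝ :=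
  ∑ u ∈ S, ∑ v ∈ Sᶜ, y u v

/-- Total weight `w(E⁺(S))` of the edges with at least one endpoint in `S`
(symmetric `y` with zero diagonal; edges inside `S` counted once via the factor 1/2). -/
noncomputable def spanW {V : Type} [Fintype V] [DecidableEq V] (y : V → V → ℝ) (S : Finset V) : ℝ :=
  cutW y S + (1 / 2) * ∑ u ∈ S, ∑ v ∈ S, y u v

/-- For the augmented graph `G'` obtained from `G` by adding a vertex `s` (adjacent to
every `v ∈ V` with weight `-(1/2) w(δ_G(v))`) and an edge `{s,t}` of weight `-B`, for
every `S ⊆ V` the total weight of edges of `G'` with at least one endpoint in `S`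
equals `w(δ_G(S)) / 2`.  Here `s = Sum.inr false`, `t = Sum.inr true`. -/
theorem stmt_17 (N : ℕ) (y : Fin N → Fin N → ℝ)
    (hsym : ∀ u v, y u v = y v u) (hdiag : ∀ u, y u u = 0)
    (B : ℝ) (y' : (Fin N ⊕ Bool) → (Fin N ⊕ Bool) → ℝ)
    (hsym' : ∀ a b, y' a b = y' b a)
    (h1 : ∀ u v, y' (Sum.inl u) (Sum.inl v) = y u v)
    (h2 : ∀ v, y' (Sum.inl v) (Sum.inr false) = -(1 / 2) * ∑ u, y v u)
    (h3 : ∀ v, y' (Sum.inl v) (Sum.inr true) = 0)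
    (h4 : y' (Sum.inr false) (Sum.inr true) = -B)
    (h5 : ∀ b, y' (Sum.inr b) (Sum.inr b) = 0) :
    ∀ S : Finset (Fin N),
      spanW y' (S.image Sum.inl) = cutW y S / 2 := by
  intro S
  classical
  have himg : ∀ f : (Fin N ⊕ Bool) → ℝ,
      ∑ a ∈ S.image Sum.inl, f a = ∑ u ∈ S, f (Sum.inl u) := by
    intro f; exact Finset.sum_image (by simp)
  have hcompl : (S.image Sum.inl)ᶜ
      = Sᶜ.image Sum.inl ∪ {Sum.inr false, Sum.inr true} := by
    ext a; cases a <;> simp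
  have hcs : ∀ f : (Fin N ⊕ Bool) → ℝ,
      ∑ a ∈ (S.image Sum.inl)ᶜ, f a
        = ∑ v ∈ Sᶜ, f (Sum.inl v) + (f (Sum.inr false) + f (Sum.inr true)) := by
    intro f
    rw [hcompl, Finset.sum_union (by simp [Finset.disjoint_left]),
      Finset.sum_image (by simp), Finset.sum_pair (by simp)]
  have hsplit : ∀ u : Fin N, (∑ w, y u w) = ∑ w ∈ S, y u w + ∑ w ∈ Sᶜ, y u w :=
    fun u => (Finset.sum_add_sum_compl S (y u)).symm
  have key : ∀ u ∈ S, ∑ v ∈ Sᶜ, y u v + (-(1 / 2) * ∑ w, y u w + 0)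
      = (1 / 2) * ∑ v ∈ Sᶜ, y u v - (1 / 2) * ∑ v ∈ S, y u v := by
    intro u _; rw [hsplit u]; ring
  simp only [spanW, cutW, himg, hcs, h1, h2, h3]
  rw [Finset.sum_congr rfl key, Finset.sum_sub_distrib, ← Finset.mul_sum, ← Finset.mul_sum]
  ring
end
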